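/- arXiv:2501.18553 — 7 statements merged into one kernel-verified Lean document; each statement's English description precedes it below -/
import Mathlib

section
/- Let k be a field with char(k) = 2, let V be a finite-dimensional k-vector space, and let B, B' : V × V → k be bilinear forms whose associated alternating forms ω_B and ω_{B'} are nondegenerate. If there exists σ ∈ GL(V) with B'(σv, σv) = B(v,v) for all v ∈ V, then V♯_B is isomorphic as a group to V♯_{B'}. Conversely, if k = 𝔽_2 and V♯_B is isomorphic as a group to V♯_{B'}, then there exists σ ∈ GL(V) with B'(σv, σv) = B(v,v) for all v ∈ V. -/
/-!
If `B'(σv, σv) = B(v, v)`, the form `C(v, w) = B'(σv, σw) - B(v, w)` is alternating, so in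
characteristic `2` it equals `D(v, w) + D(w, v)` for `D` the strictly upper triangular part of its
Gram matrix; then `(a, v) ↦ (a + D(v, v), σv)` is an isomorphism `V♯_B ≃ V♯_{B'}`.

Conversely, nondegeneracy of `ω_{B'}` makes `k × 0` the centre of `V♯_{B'}`, so an isomorphism `e`
maps `k × 0` into itself and induces additive bijections of `k` and of `V = V♯ / (k × 0)`. Over
`𝔽₂` the first is the identity and the second, `σ`, is linear; applying `e` to the square
`(0, v)² = (B(v, v), 0)` then gives `B(v, v) = B'(σv, σv)`.
-/

namespace LinearMap

variable {R M : Type*} [CommRing R] [AddCommGroup M] [Module R M]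

theorem exists_sub_flip_eq_of_isAlt [Module.Free R M] [Module.Finite R M]
    {C : M →ₗ[R] M →ₗ[R] R} (hC : C.IsAlt) : ∃ D : M →ₗ[R] M →ₗ[R] R, D - D.flip = C := by
  let b := (Module.Free.chooseBasis R M).reindex (Fintype.equivFin _)
  refine ⟨Matrix.toLinearMap₂ b b (Matrix.of fun i j => if i < j then C (b i) (b j) else 0),
    ext_basis b b fun i j => ?_⟩
  simp only [sub_apply, flip_apply, Matrix.toLinearMap₂_apply_basis, Matrix.of_apply]
  rcases lt_trichotomy i j with h | rfl | h
  · simp [h, h.not_gt]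
  · simp [hC.self_eq_zero]
  · simp [h, h.not_gt, hC.neg]

end LinearMap

section Sharp

variable {R M : Type*} [CommRing R] [AddCommGroup M] [Module R M]

def sharpMul (B : M →ₗ[R] M →ₗ[R] R) (x y : R × M) : R × M :=
  (x.1 + y.1 + B x.2 y.2, x.2 + y.2)

def IsSharpHom (B B' : M →ₗ[R] M →ₗ[R] R) (e : R × M → R × M) : Prop :=
  ∀ x y, e (sharpMul B x y) = sharpMul B' (e x) (e y)

def shearEquiv (σ : M ≃ₗ[R] M) (q : M → R) : R × M ≃ R × M where
  toFun x := (x.1 + q x.2, σ x.2)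
  invFun x := (x.1 - q (σ.symm x.2), σ.symm x.2)
  left_inv x := by simp
  right_inv x := by simp

variable {B B' : M →ₗ[R] M →ₗ[R] R}

theorem isSharpHom_shearEquiv {σ : M ≃ₗ[R] M} {D : M →ₗ[R] M →ₗ[R] R}
    (hD : ∀ v w, D v w + D w v = B' (σ v) (σ w) - B v w) :
    IsSharpHom B B' (shearEquiv σ fun v => D v v) := by
  rintro ⟨a, v⟩ ⟨c, w⟩
  ext
  · simp only [shearEquiv, sharpMul, Equiv.coe_fn_mk, map_add, LinearMap.add_apply]
    linear_combination hD v w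
  · simp [shearEquiv, sharpMul]

theorem exists_isSharpHom_of_apply_self_eq [CharP R 2] [Module.Free R M] [Module.Finite R M]
    (σ : M ≃ₗ[R] M) (hσ : ∀ v, B' (σ v) (σ v) = B v v) :
    ∃ e : R × M ≃ R × M, IsSharpHom B B' e := by
  obtain ⟨D, hD⟩ := LinearMap.exists_sub_flip_eq_of_isAlt
    (C := B'.compl₁₂ σ.toLinearMap σ.toLinearMap - B) fun v => by simp [hσ]
  refine ⟨shearEquiv σ fun v => D v v, isSharpHom_shearEquiv fun v w => ?_⟩
  simpa [CharTwo.sub_eq_add] using congr($hD v w)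

namespace IsSharpHom

variable {e : R × M ≃ R × M} (he : IsSharpHom B B' e)
include he

theorem fst_apply_mk_self [CharP R 2] (v : M) :
    (e (B v v, 0)).1 = B' (e (0, v)).2 (e (0, v)).2 := by
  have hv : v + v = 0 := by rw [← two_smul R v, CharTwo.two_eq_zero, zero_smul]
  simpa [sharpMul, hv, CharTwo.add_self_eq_zero] using congrArg Prod.fst (he (0, v) (0, v))

variable (hB' : ∀ v, (∀ w, B' v w - B' w v = 0) → v = 0)
include hB'

theorem snd_apply_mk_zero (a : R) : (e (a, 0)).2 = 0 := by
  refine hB' _ fun w => ?_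
  have hy : e (e.symm (0, w)) = (0, w) := e.apply_symm_apply _
  have hcomm : sharpMul B (a, 0) (e.symm (0, w)) = sharpMul B (e.symm (0, w)) (a, 0) := by
    simp [sharpMul, add_comm]
  have hfst := congrArg Prod.fst ((he _ _).symm.trans ((congrArg e hcomm).trans (he _ _)))
  simp only [sharpMul, hy] at hfst
  linear_combination hfst

theorem snd_apply_mk (a : R) (v : M) : (e (a, v)).2 = (e (0, v)).2 := by
  have h := congrArg Prod.snd (he (a, 0) (0, v))
  simpa [sharpMul, he.snd_apply_mk_zero hB'] using h

theorem snd_apply_mk_add (v w : M) : (e (0, v + w)).2 = (e (0, v)).2 + (e (0, w)).2 := by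
  have h := congrArg Prod.snd (he (0, v) (0, w))
  simp only [sharpMul, zero_add] at h
  rwa [he.snd_apply_mk hB'] at h

def centerHom : R →+ R :=
  AddMonoidHom.mk' (fun a => (e (a, 0)).1) fun a c => by
    simpa [sharpMul, he.snd_apply_mk_zero hB'] using congrArg Prod.fst (he (a, 0) (c, 0))

theorem centerHom_injective : Function.Injective (he.centerHom hB') := fun a c h => by
  simpa using e.injective (Prod.ext h (by simp [he.snd_apply_mk_zero hB']))

end IsSharpHom

end Sharp

section CardTwo

variable {k : Type*} [Ring k] [Nontrivial k] (hcard : Nat.card k = 2)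
include hcard

theorem eq_zero_or_eq_one_of_card_eq_two (c : k) : c = 0 ∨ c = 1 := by
  obtain ⟨y, -, hy⟩ := (Nat.card_eq_two_iff' (0 : k)).1 hcard
  by_contra! hc
  exact hc.2 ((hy c hc.1).trans (hy 1 one_ne_zero).symm)

theorem AddMonoidHom.apply_eq_self_of_card_eq_two {f : k →+ k} (hf : Function.Injective f)
    (a : k) : f a = a := by
  rcases eq_zero_or_eq_one_of_card_eq_two hcard a with rfl | rfl
  · exact f.map_zero
  rcases eq_zero_or_eq_one_of_card_eq_two hcard (f 1) with h | h
  · exact absurd (hf (h.trans f.map_zero.symm)) one_ne_zero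
  · exact h

end CardTwo

theorem IsSharpHom.exists_linearEquiv_of_card_eq_two {k V : Type*} [Field k] [CharP k 2]
    [AddCommGroup V] [Module k V] [FiniteDimensional k V] (hcard : Nat.card k = 2)
    {B B' : V →ₗ[k] V →ₗ[k] k} (hB' : ∀ v, (∀ w, B' v w - B' w v = 0) → v = 0)
    {e : k × V ≃ k × V} (he : IsSharpHom B B' e) :
    ∃ σ : V ≃ₗ[k] V, ∀ v, B' (σ v) (σ v) = B v v := by
  let σ : V →ₗ[k] V :=
    { toFun v := (e (0, v)).2
      map_add' := he.snd_apply_mk_add hB'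
      map_smul' c v := by
        rcases eq_zero_or_eq_one_of_card_eq_two hcard c with rfl | rfl <;>
          simp [he.snd_apply_mk_zero hB'] }
  have hsurj : Function.Surjective σ := fun w =>
    ⟨(e.symm (0, w)).2, by simp [σ, ← he.snd_apply_mk hB' (e.symm (0, w)).1]⟩
  have : Finite k := Nat.finite_of_card_ne_zero (by omega)
  have : Finite V := Module.finite_of_finite k
  refine ⟨.ofBijective σ ⟨Finite.injective_iff_surjective.2 hsurj, hsurj⟩, fun v => ?_⟩
  exact (he.fst_apply_mk_self v).symm.trans
    (AddMonoidHom.apply_eq_self_of_card_eq_two hcard (he.centerHom_injective hB') _)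

theorem stmt_2_general (k : Type*) [Field k] (hk : ringChar k = 2)
    (V : Type*) [AddCommGroup V] [Module k V] [FiniteDimensional k V]
    (B B' : V →ₗ[k] V →ₗ[k] k)
    (hB' : ∀ v : V, (∀ w : V, B' v w - B' w v = 0) → v = 0) :
    ((∃ σ : V ≃ₗ[k] V, ∀ v : V, B' (σ v) (σ v) = B v v) →
      ∃ e : (k × V) ≃ (k × V), ∀ x y : k × V,
        e (x.1 + y.1 + B x.2 y.2, x.2 + y.2) =
          ((e x).1 + (e y).1 + B' (e x).2 (e y).2, (e x).2 + (e y).2)) ∧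
    (Nat.card k = 2 →
      (∃ e : (k × V) ≃ (k × V), ∀ x y : k × V,
        e (x.1 + y.1 + B x.2 y.2, x.2 + y.2) =
          ((e x).1 + (e y).1 + B' (e x).2 (e y).2, (e x).2 + (e y).2)) →
      ∃ σ : V ≃ₗ[k] V, ∀ v : V, B' (σ v) (σ v) = B v v) := by
  have : CharP k 2 := hk ▸ ringChar.charP k
  exact ⟨fun ⟨σ, hσ⟩ => exists_isSharpHom_of_apply_self_eq σ hσ,
    fun hcard ⟨_, he⟩ => IsSharpHom.exists_linearEquiv_of_card_eq_two hcard hB' he⟩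

/-- Let `k` be a field of characteristic `2`, `V` a finite-dimensional
`k`-vector space, and `B, B'` bilinear forms on `V` whose associated
alternating forms `ω_B(v,w) = B(v,w) - B(w,v)` and `ω_{B'}` are nondegenerate.
If there is `σ ∈ GL(V)` with `B'(σv,σv) = B(v,v)` for all `v`, then `V♯_B` is
isomorphic as a group to `V♯_{B'}` (where `V♯_B` is `k × V` with multiplication
`(a,v)·(b,w) = (a + b + B(v,w), v + w)`).  Conversely, if `k = 𝔽_2` (i.e. `k`
has exactly two elements) and `V♯_B ≅ V♯_{B'}`, then such a `σ` exists. -/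
theorem stmt_2 (k : Type*) [Field k] (hk : ringChar k = 2)
    (V : Type*) [AddCommGroup V] [Module k V] [FiniteDimensional k V]
    (B B' : V →ₗ[k] V →ₗ[k] k)
    (hB : ∀ v : V, (∀ w : V, B v w - B w v = 0) → v = 0)
    (hB' : ∀ v : V, (∀ w : V, B' v w - B' w v = 0) → v = 0) :
    ((∃ σ : V ≃ₗ[k] V, ∀ v : V, B' (σ v) (σ v) = B v v) →
      ∃ e : (k × V) ≃ (k × V), ∀ x y : k × V,
        e (x.1 + y.1 + B x.2 y.2, x.2 + y.2) =
          ((e x).1 + (e y).1 + B' (e x).2 (e y).2, (e x).2 + (e y).2)) ∧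
    (Nat.card k = 2 →
      (∃ e : (k × V) ≃ (k × V), ∀ x y : k × V,
        e (x.1 + y.1 + B x.2 y.2, x.2 + y.2) =
          ((e x).1 + (e y).1 + B' (e x).2 (e y).2, (e x).2 + (e y).2)) →
      ∃ σ : V ≃ₗ[k] V, ∀ v : V, B' (σ v) (σ v) = B v v) :=
  stmt_2_general k hk V B B' hB'
end

section
/- Let p be an odd prime. Then any two Heisenberg 𝔽_p-groups of the same cardinality are isomorphic. -/
open scoped commutatorElement

/-- A *Heisenberg `𝔽_p`-group*: a finite group `P` whose center has order `p`,
such that `P/Z(P)` is abelian of exponent dividing `p`, and such that,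
if `p ≠ 2`, `P` itself has exponent dividing `p`. -/
structure IsHeisenberg (p : ℕ) (P : Type*) [Group P] : Prop where
  card_center : Nat.card (Subgroup.center P) = p
  commutator_mem : ∀ x y : P, ⁅x, y⁆ ∈ Subgroup.center P
  pow_mem_center : ∀ x : P, x ^ p ∈ Subgroup.center P
  pow_eq_one : p ≠ 2 → ∀ x : P, x ^ p = 1

/-!
Every Heisenberg `𝔽_p`-group with `p` odd is isomorphic to a model group `Heisenberg (ZMod p) n` of
unitriangular matrices, of order `p ^ (2 * n + 1)`, so its order determines it.

Fix a generator `z` of the centre. If `P` is not abelian, pick `x` outside the centre; as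
commutators are central, `⁅x, ·⁆` is a nontrivial homomorphism into the centre, which has prime
order, so `⁅x, y⁆ = z` for some `y`.
Then every element of `P` is uniquely `y ^ b * x ^ a * k` with `a, b ∈ 𝔽_p` and `k` in the
centralizer `K` of `{x, y}`, and `K` is again a Heisenberg group with the same centre. By induction
on `|P|`, `K` is a model group, and `x`, `y` supply one more row and column entry.
-/

@[ext]
structure Heisenberg (R : Type*) (n : ℕ) where
  a : Fin n → R
  b : Fin n → R
  c : R

namespace Heisenberg

variable {R : Type*} {n : ℕ}

def tail (u : Heisenberg R (n + 1)) : Heisenberg R n := ⟨Fin.tail u.a, Fin.tail u.b, u.c⟩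

def cons (x y : R) (w : Heisenberg R n) : Heisenberg R (n + 1) :=
  ⟨Fin.cons x w.a, Fin.cons y w.b, w.c⟩

@[simp] lemma cons_a_zero (x y : R) (w : Heisenberg R n) : (cons x y w).a 0 = x := rfl
@[simp] lemma cons_b_zero (x y : R) (w : Heisenberg R n) : (cons x y w).b 0 = y := rfl
@[simp] lemma tail_cons (x y : R) (w : Heisenberg R n) : tail (cons x y w) = w := rfl

lemma cons_head_tail (u : Heisenberg R (n + 1)) : cons (u.a 0) (u.b 0) (tail u) = u := by
  ext <;> simp [cons, tail]

section Group

variable [CommRing R]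

-- `⟨a, b, c⟩` is the matrix `!![1, a, c; 0, 1, b; 0, 0, 1]`.
instance : Mul (Heisenberg R n) := ⟨fun u v => ⟨u.a + v.a, u.b + v.b, u.c + v.c + u.a ⬝ᵥ v.b⟩⟩
instance : One (Heisenberg R n) := ⟨⟨0, 0, 0⟩⟩
instance : Inv (Heisenberg R n) := ⟨fun u => ⟨-u.a, -u.b, -u.c + u.a ⬝ᵥ u.b⟩⟩

@[simp] lemma mul_a (u v : Heisenberg R n) : (u * v).a = u.a + v.a := rfl
@[simp] lemma mul_b (u v : Heisenberg R n) : (u * v).b = u.b + v.b := rfl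
@[simp] lemma mul_c (u v : Heisenberg R n) : (u * v).c = u.c + v.c + u.a ⬝ᵥ v.b := rfl
@[simp] lemma one_a : (1 : Heisenberg R n).a = 0 := rfl
@[simp] lemma one_b : (1 : Heisenberg R n).b = 0 := rfl
@[simp] lemma one_c : (1 : Heisenberg R n).c = 0 := rfl
@[simp] lemma inv_a (u : Heisenberg R n) : u⁻¹.a = -u.a := rfl
@[simp] lemma inv_b (u : Heisenberg R n) : u⁻¹.b = -u.b := rfl
@[simp] lemma inv_c (u : Heisenberg R n) : u⁻¹.c = -u.c + u.a ⬝ᵥ u.b := rfl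

instance : Group (Heisenberg R n) where
  mul_assoc u v w := by
    refine Heisenberg.ext (add_assoc ..) (add_assoc ..) ?_
    simp only [mul_a, mul_b, mul_c, add_dotProduct, dotProduct_add]
    abel
  one_mul u := by ext <;> simp
  mul_one u := by ext <;> simp
  inv_mul_cancel u := by ext <;> simp [neg_dotProduct]

lemma cons_zero_zero_one : cons 0 0 (1 : Heisenberg R n) = 1 := by
  refine Heisenberg.ext ?_ ?_ rfl <;> funext i <;> cases i using Fin.cases <;> rfl

def central (e : R) : Heisenberg R n := ⟨0, 0, e⟩

@[simp] lemma central_a (e : R) : (central e : Heisenberg R n).a = 0 := rfl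
@[simp] lemma central_b (e : R) : (central e : Heisenberg R n).b = 0 := rfl
@[simp] lemma tail_central (e : R) : tail (central e : Heisenberg R (n + 1)) = central e := rfl

lemma central_pow (e : R) (j : ℕ) : (central e : Heisenberg R n) ^ j = central (j * e) := by
  induction j with
  | zero => ext <;> simp [central]
  | succ j ih =>
    rw [pow_succ, ih]
    ext <;> simp [central, add_mul]

lemma tail_mul (u v : Heisenberg R (n + 1)) :
    tail (u * v) = central (u.a 0 * v.b 0) * (tail u * tail v) := by
  ext <;> simp [tail, central, dotProduct, Fin.sum_univ_succ, Fin.tail]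
  ring

end Group

lemma card_zmod (p n : ℕ) : Nat.card (Heisenberg (ZMod p) n) = p ^ (2 * n + 1) := by
  let e : Heisenberg (ZMod p) n ≃ (Fin n → ZMod p) × (Fin n → ZMod p) × ZMod p :=
    ⟨fun u => (u.a, u.b, u.c), fun x => ⟨x.1, x.2.1, x.2.2⟩, fun _ => rfl, fun _ => rfl⟩
  rw [Nat.card_congr e, Nat.card_prod, Nat.card_prod, Nat.card_fun, Nat.card_zmod, Nat.card_fin]
  ring

lemma central_eq_pow {p : ℕ} [NeZero p] (e : ZMod p) :
    (central e : Heisenberg (ZMod p) n) = central 1 ^ e.val := by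
  rw [central_pow, mul_one, ZMod.natCast_zmod_val]

end Heisenberg

section ZModPow

variable {G : Type*} [Group G] {p : ℕ} {g : G}

lemma pow_zmod_val_mul (hg : g ^ p = 1) (a b : ZMod p) :
    g ^ (a * b).val = g ^ (a.val * b.val) := by
  rw [ZMod.val_mul, ← pow_eq_pow_mod _ hg]

variable [NeZero p]

lemma pow_zmod_val_add (hg : g ^ p = 1) (a b : ZMod p) :
    g ^ (a + b).val = g ^ a.val * g ^ b.val := by
  rw [ZMod.val_add, ← pow_eq_pow_mod _ hg, pow_add]

lemma pow_zmod_val_eq_one_iff (hg : orderOf g = p) {a : ZMod p} : g ^ a.val = 1 ↔ a = 0 := by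
  rw [← orderOf_dvd_iff_pow_eq_one, hg, ← ZMod.natCast_eq_zero_iff, ZMod.natCast_zmod_val]

lemma exists_pow_zmod_val_eq (hg : g ^ p = 1) {w : G} (hw : w ∈ Subgroup.zpowers g) :
    ∃ a : ZMod p, g ^ a.val = w := by
  have hfin : IsOfFinOrder g := isOfFinOrder_iff_pow_eq_one.mpr ⟨p, NeZero.pos p, hg⟩
  obtain ⟨k, rfl⟩ := hfin.mem_powers_iff_mem_zpowers.mpr hw
  exact ⟨k, by rw [ZMod.val_natCast, ← pow_eq_pow_mod _ hg]⟩

end ZModPow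

section ClassTwo

variable {G : Type*} [Group G] (hG : ∀ g h : G, ⁅g, h⁆ ∈ Subgroup.center G)
include hG

lemma commutatorElement_mul_right_of_mem_center (g h k : G) :
    ⁅g, h * k⁆ = ⁅g, h⁆ * ⁅g, k⁆ := by
  rw [commutatorElement_mul_right_eq_mul_conj, mul_assoc _ h,
    Subgroup.mem_center_iff.mp (hG g k) h, mul_assoc, mul_assoc, mul_inv_cancel, mul_one]

lemma commutatorElement_mul_left_of_mem_center (g h k : G) :
    ⁅g * h, k⁆ = ⁅g, k⁆ * ⁅h, k⁆ := by
  rw [commutatorElement_mul_left_eq_conj_mul, Subgroup.mem_center_iff.mp (hG h k) g,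
    mul_inv_cancel_right, (Subgroup.mem_center_iff.mp (hG h k) ⁅g, k⁆)]

lemma commutatorElement_pow_right_of_mem_center (g h : G) (n : ℕ) : ⁅g, h ^ n⁆ = ⁅g, h⁆ ^ n :=
  map_pow (MonoidHom.mk' (⁅g, ·⁆) (commutatorElement_mul_right_of_mem_center hG g)) h n

lemma commutatorElement_pow_left_of_mem_center (g h : G) (n : ℕ) : ⁅g ^ n, h⁆ = ⁅g, h⁆ ^ n :=
  map_pow (MonoidHom.mk' (⁅·, h⁆) fun g g' => commutatorElement_mul_left_of_mem_center hG g g' h)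
    g n

variable {x y : G}

lemma commutatorElement_normalForm_right (a b : ℕ) (k : G) :
    ⁅x, y ^ b * x ^ a * k⁆ = ⁅x, y⁆ ^ b * ⁅x, k⁆ := by
  simp only [commutatorElement_mul_right_of_mem_center hG,
    commutatorElement_pow_right_of_mem_center hG, commutatorElement_self, one_pow, mul_one]

lemma commutatorElement_normalForm_left (a b : ℕ) (k : G) :
    ⁅y ^ b * x ^ a * k, y⁆ = ⁅x, y⁆ ^ a * ⁅k, y⁆ := by
  simp only [commutatorElement_mul_left_of_mem_center hG,
    commutatorElement_pow_left_of_mem_center hG, commutatorElement_self, one_pow, one_mul]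

lemma normalForm_mul_normalForm {k k' : G} (hkx : Commute x k) (hky : Commute y k)
    (a b a' b' : ℕ) :
    y ^ b * x ^ a * k * (y ^ b' * x ^ a' * k') =
      y ^ (b + b') * x ^ (a + a') * (⁅x, y⁆ ^ (a * b') * (k * k')) := by
  set c := ⁅x, y⁆ ^ (a * b')
  have hc : ∀ g, g * c = c * g := Subgroup.mem_center_iff.mp (Subgroup.pow_mem _ (hG x y) _)
  have hk : k * (y ^ b' * x ^ a' * k') = y ^ b' * x ^ a' * (k * k') := by
    rw [← mul_assoc, ← ((hky.pow_left b').mul_left (hkx.pow_left a')).eq, mul_assoc]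
  have hxy : x ^ a * y ^ b' = c * (y ^ b' * x ^ a) := by
    rw [show c = ⁅x ^ a, y ^ b'⁆ by rw [commutatorElement_pow_right_of_mem_center hG,
      commutatorElement_pow_left_of_mem_center hG]; exact pow_mul _ _ _]
    group
  calc y ^ b * x ^ a * k * (y ^ b' * x ^ a' * k')
      = y ^ b * (x ^ a * y ^ b') * (x ^ a' * (k * k')) := by
        rw [mul_assoc _ k, hk]; simp only [mul_assoc]
    _ = y ^ (b + b') * x ^ (a + a') * (c * (k * k')) := by
      rw [hxy, ← hc]
      simp only [pow_add, mul_assoc]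
      rw [← mul_assoc c, ← hc, mul_assoc]

end ClassTwo

namespace Heisenberg

variable {p : ℕ} [NeZero p] {G : Type*} [Group G]

def powHom {z : G} (hz : z ^ p = 1) : Heisenberg (ZMod p) 0 →* G where
  toFun u := z ^ u.c.val
  map_one' := by simp
  map_mul' u v := by simp [pow_zmod_val_add hz]

lemma powHom_bijective {z : G} (hz : z ^ p = 1) (hord : orderOf z = p)
    (htop : Subgroup.zpowers z = ⊤) : Function.Bijective (powHom hz) := by
  refine ⟨(injective_iff_map_eq_one _).mpr fun u hu => ?_, fun g => ?_⟩
  · have hc : u.c = 0 := (pow_zmod_val_eq_one_iff hord).mp hu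
    ext i
    exacts [i.elim0, i.elim0, hc]
  · obtain ⟨c, hc⟩ := exists_pow_zmod_val_eq hz (htop ▸ Subgroup.mem_top g)
    exact ⟨⟨0, 0, c⟩, hc⟩

variable (hG : ∀ g h : G, ⁅g, h⁆ ∈ Subgroup.center G) {x y : G} (hx : x ^ p = 1) (hy : y ^ p = 1)
  {m : ℕ} (φ : Heisenberg (ZMod p) m →* G) (hφx : ∀ w, Commute x (φ w))
  (hφy : ∀ w, Commute y (φ w)) (hφ : φ (central 1) = ⁅x, y⁆)

def extendHom : Heisenberg (ZMod p) (m + 1) →* G where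
  toFun u := y ^ (u.b 0).val * x ^ (u.a 0).val * φ u.tail
  map_one' := by simp [← cons_zero_zero_one]
  map_mul' u v := by
    have hz : ⁅x, y⁆ ^ p = 1 := by
      rw [← commutatorElement_pow_left_of_mem_center hG, hx, commutatorElement_one_left]
    rw [normalForm_mul_normalForm hG (hφx _) (hφy _), tail_mul, map_mul, map_mul, central_eq_pow,
      map_pow, hφ, ← pow_zmod_val_mul hz]
    simp only [mul_a, mul_b, Pi.add_apply, pow_zmod_val_add hx, pow_zmod_val_add hy, pow_add]

lemma extendHom_apply (u : Heisenberg (ZMod p) (m + 1)) :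
    extendHom hG hx hy φ hφx hφy hφ u = y ^ (u.b 0).val * x ^ (u.a 0).val * φ u.tail := rfl

lemma extendHom_cons (a b : ZMod p) (w : Heisenberg (ZMod p) m) :
    extendHom hG hx hy φ hφx hφy hφ (cons a b w) = y ^ b.val * x ^ a.val * φ w := rfl

lemma extendHom_bijective (hord : orderOf ⁅x, y⁆ = p) (hφinj : Function.Injective φ)
    (hnf : ∀ g : G, ∃ (a b : ZMod p) (w : Heisenberg (ZMod p) m), y ^ b.val * x ^ a.val * φ w = g) :
    Function.Bijective (extendHom hG hx hy φ hφx hφy hφ) := by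
  refine ⟨(injective_iff_map_eq_one _).mpr fun u hu => ?_, fun g => ?_⟩
  · obtain ⟨a, b, w, rfl⟩ : ∃ a b w, cons a b w = u := ⟨_, _, _, cons_head_tail u⟩
    rw [extendHom_cons] at hu
    have hb : b = 0 := by
      have h := congrArg (⁅x, ·⁆) hu
      simp only [commutatorElement_normalForm_right hG, (hφx _).commutator_eq, mul_one,
        commutatorElement_one_right] at h
      exact (pow_zmod_val_eq_one_iff hord).mp h
    have ha : a = 0 := by
      have h := congrArg (⁅·, y⁆) hu
      simp only [commutatorElement_normalForm_left hG, (hφy _).symm.commutator_eq, mul_one,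
        commutatorElement_one_left] at h
      exact (pow_zmod_val_eq_one_iff hord).mp h
    rw [ha, hb, ZMod.val_zero, pow_zero, pow_zero, one_mul, one_mul, ← map_one φ] at hu
    rw [ha, hb, hφinj hu, cons_zero_zero_one]
  · obtain ⟨a, b, w, rfl⟩ := hnf g
    exact ⟨cons a b w, rfl⟩

end Heisenberg

section Centralizer

variable {P : Type*} [Group P] {x y : P}

lemma mem_centralizer_pair_iff {k : P} :
    k ∈ Subgroup.centralizer {x, y} ↔ Commute x k ∧ Commute y k := by
  simp [Subgroup.mem_centralizer_iff, Commute, SemiconjBy]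

lemma card_centralizer_pair_lt [Finite P] (h : ⁅x, y⁆ ≠ 1) :
    Nat.card (Subgroup.centralizer {x, y}) < Nat.card P :=
  Finite.card_subtype_lt (x := x) fun hx => h (mem_centralizer_pair_iff.mp hx).2.symm.commutator_eq

variable {p : ℕ}

lemma map_subtype_center_centralizer_pair (hnf : ∀ g : P, ∃ (a b : ZMod p),
      ∃ k ∈ Subgroup.centralizer {x, y}, y ^ b.val * x ^ a.val * k = g) :
    (Subgroup.center (Subgroup.centralizer {x, y})).map (Subgroup.centralizer {x, y}).subtype =
      Subgroup.center P := by
  ext g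
  constructor
  · rintro ⟨k, hk, rfl⟩
    refine Subgroup.mem_center_iff.mpr fun g => ?_
    obtain ⟨a, b, k', hk', rfl⟩ := hnf g
    obtain ⟨hxk, hyk⟩ := mem_centralizer_pair_iff.mp k.2
    have hk'k : Commute k' k := congrArg Subtype.val (Subgroup.mem_center_iff.mp hk ⟨k', hk'⟩)
    exact (((hyk.pow_left _).mul_left (hxk.pow_left _)).mul_left hk'k).eq
  · intro hg
    refine ⟨⟨g, Subgroup.center_le_centralizer _ hg⟩, ?_, rfl⟩
    exact Subgroup.mem_center_iff.mpr fun k => Subtype.ext (Subgroup.mem_center_iff.mp hg k)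

lemma isHeisenberg_centralizer_pair (hP : IsHeisenberg p P) (hexp : ∀ g : P, g ^ p = 1)
    (hnf : ∀ g : P, ∃ (a b : ZMod p),
      ∃ k ∈ Subgroup.centralizer {x, y}, y ^ b.val * x ^ a.val * k = g) :
    IsHeisenberg p (Subgroup.centralizer {x, y}) := by
  have hmap := map_subtype_center_centralizer_pair hnf
  have hpow (k : Subgroup.centralizer {x, y}) : k ^ p = 1 := Subtype.ext (hexp k)
  refine ⟨?_, fun k k' => ?_, fun k => hpow k ▸ Subgroup.one_mem _, fun _ => hpow⟩
  · rw [← Subgroup.card_map_of_injective (Subgroup.subtype_injective _), hmap, hP.card_center]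
  · rw [← Subgroup.mem_map_iff_mem (Subgroup.subtype_injective _), hmap]
    exact hP.commutator_mem k k'

variable (hG : ∀ g h : P, ⁅g, h⁆ ∈ Subgroup.center P)
include hG

lemma exists_normalForm [NeZero p] (hz : ⁅x, y⁆ ^ p = 1)
    (hZ : Subgroup.center P ≤ Subgroup.zpowers ⁅x, y⁆) (g : P) :
    ∃ (a b : ZMod p), ∃ k ∈ Subgroup.centralizer {x, y}, y ^ b.val * x ^ a.val * k = g := by
  obtain ⟨b, hb⟩ := exists_pow_zmod_val_eq hz (hZ (hG x g))
  obtain ⟨a, ha⟩ := exists_pow_zmod_val_eq hz (hZ (hG g y))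
  set k := (y ^ b.val * x ^ a.val)⁻¹ * g
  have hg : y ^ b.val * x ^ a.val * k = g := mul_inv_cancel_left _ _
  refine ⟨a, b, k, mem_centralizer_pair_iff.mpr ⟨?_, ?_⟩, hg⟩
  · have h := commutatorElement_normalForm_right hG (x := x) (y := y) a.val b.val k
    rw [hg, ← hb] at h
    exact commutatorElement_eq_one_iff_commute.mp (left_eq_mul.mp h)
  · have h := commutatorElement_normalForm_left hG (x := x) (y := y) a.val b.val k
    rw [hg, ← ha] at h
    exact (commutatorElement_eq_one_iff_commute.mp (left_eq_mul.mp h)).symm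

lemma exists_commutatorElement_eq [Fact p.Prime] {z : P} (hord : orderOf z = p)
    (hZ : Subgroup.center P ≤ Subgroup.zpowers z) (hx : x ∉ Subgroup.center P) :
    ∃ y, ⁅x, y⁆ = z := by
  have hz : z ^ p = 1 := hord ▸ pow_orderOf_eq_one z
  obtain ⟨y₀, hy₀⟩ : ∃ y₀ : P, ⁅x, y₀⁆ ≠ 1 := by
    by_contra! h
    exact hx (Subgroup.mem_center_iff.mpr fun g =>
      (commutatorElement_eq_one_iff_commute.mp (h g)).eq.symm)
  obtain ⟨c, hc⟩ := exists_pow_zmod_val_eq hz (hZ (hG x y₀))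
  have hc0 : c ≠ 0 := by rintro rfl; exact hy₀ (by rw [← hc, ZMod.val_zero, pow_zero])
  refine ⟨y₀ ^ c⁻¹.val, ?_⟩
  rw [commutatorElement_pow_right_of_mem_center hG, ← hc, ← pow_mul, ← pow_zmod_val_mul hz,
    mul_inv_cancel₀ hc0, ZMod.val_one, pow_one]

end Centralizer

namespace IsHeisenberg

variable {p : ℕ} [Fact p.Prime]

lemma zpowers_eq_center {P : Type*} [Group P] (hP : IsHeisenberg p P) {z : P}
    (hz : z ∈ Subgroup.center P) (hz1 : z ≠ 1) (hzp : z ^ p = 1) :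
    Subgroup.zpowers z = Subgroup.center P := by
  have : Finite (Subgroup.center P) :=
    Nat.finite_of_card_ne_zero (hP.card_center ▸ (Fact.out : p.Prime).ne_zero)
  refine Subgroup.eq_of_le_of_card_ge (Subgroup.zpowers_le.mpr hz) ?_
  rw [hP.card_center, Nat.card_zpowers, orderOf_eq_prime hzp hz1]

theorem exists_mulEquiv_heisenberg (hodd : p ≠ 2) {P : Type*} [Group P] [Finite P]
    (hP : IsHeisenberg p P) {z : P} (hz : z ∈ Subgroup.center P) (hz1 : z ≠ 1) :
    ∃ n, ∃ e : Heisenberg (ZMod p) n ≃* P, e (Heisenberg.central 1) = z := by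
  induction hN : Nat.card P using Nat.strong_induction_on generalizing P z with
  | _ N ih =>
  have hexp := hP.pow_eq_one hodd
  have hord : orderOf z = p := orderOf_eq_prime (hexp z) hz1
  have hZ := hP.zpowers_eq_center hz hz1 (hexp z)
  by_cases htop : Subgroup.center P = ⊤
  · refine ⟨0, .ofBijective _ (Heisenberg.powHom_bijective (hexp z) hord (hZ.trans htop)), ?_⟩
    simp [Heisenberg.powHom, Heisenberg.central, ZMod.val_one]
  obtain ⟨x, hx⟩ : ∃ x, x ∉ Subgroup.center P := by simpa [Subgroup.eq_top_iff'] using htop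
  obtain ⟨y, rfl⟩ := exists_commutatorElement_eq hP.commutator_mem hord hZ.ge hx
  have hnf := exists_normalForm hP.commutator_mem (hexp _) hZ.ge
  obtain ⟨m, e, he⟩ := ih _ (hN ▸ card_centralizer_pair_lt hz1)
    (isHeisenberg_centralizer_pair hP hexp hnf)
    (z := ⟨⁅x, y⁆, Subgroup.center_le_centralizer _ hz⟩)
    (by rw [← Subgroup.mem_map_iff_mem (Subgroup.subtype_injective _),
      map_subtype_center_centralizer_pair hnf]; exact hz)
    (by simpa using hz1) rfl
  let φ := (Subgroup.centralizer {x, y}).subtype.comp e.toMonoidHom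
  have hφ (w) : Commute x (φ w) ∧ Commute y (φ w) := mem_centralizer_pair_iff.mp (e w).2
  have hbij := Heisenberg.extendHom_bijective hP.commutator_mem (hexp x) (hexp y) φ
    (fun w => (hφ w).1) (fun w => (hφ w).2) (by simp [φ, he]) hord
    (Subtype.val_injective.comp e.injective) fun g => by
      obtain ⟨a, b, k, hk, rfl⟩ := hnf g
      exact ⟨a, b, e.symm ⟨k, hk⟩, by simp [φ]⟩
  exact ⟨m + 1, .ofBijective _ hbij, by simp [Heisenberg.extendHom_apply, φ, he]⟩

theorem nonempty_mulEquiv_heisenberg (hodd : p ≠ 2) {P : Type*} [Group P] [Finite P]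
    (hP : IsHeisenberg p P) : ∃ n, Nonempty (Heisenberg (ZMod p) n ≃* P) := by
  have := Finite.one_lt_card_iff_nontrivial.mp (hP.card_center ▸ (Fact.out : p.Prime).one_lt)
  obtain ⟨z, hz, hz1⟩ := (Subgroup.center P).exists_ne_one_of_nontrivial
  obtain ⟨n, e, -⟩ := hP.exists_mulEquiv_heisenberg hodd hz hz1
  exact ⟨n, ⟨e⟩⟩

end IsHeisenberg

/-- For an odd prime `p`, any two Heisenberg `𝔽_p`-groups of the same
cardinality are isomorphic. -/
theorem stmt_3 (p : ℕ) (hp : p.Prime) (hodd : p ≠ 2)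
    (P : Type*) [Group P] [Finite P] (Q : Type*) [Group Q] [Finite Q]
    (hP : IsHeisenberg p P) (hQ : IsHeisenberg p Q)
    (hcard : Nat.card P = Nat.card Q) :
    Nonempty (P ≃* Q) := by
  have : Fact p.Prime := ⟨hp⟩
  obtain ⟨n, ⟨e⟩⟩ := hP.nonempty_mulEquiv_heisenberg hodd
  obtain ⟨n', ⟨e'⟩⟩ := hQ.nonempty_mulEquiv_heisenberg hodd
  obtain rfl : n = n' := by
    rw [← Nat.card_congr e.toEquiv, ← Nat.card_congr e'.toEquiv, Heisenberg.card_zmod,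
      Heisenberg.card_zmod] at hcard
    have := Nat.pow_right_injective hp.two_le hcard
    omega
  exact ⟨e.symm.trans e'⟩
end

section
/- (Stone–von Neumann theorem) Let p be a prime, let P be a Heisenberg 𝔽_p-group, and let ψ : Z(P) → ℂˣ be a nontrivial group homomorphism. Then there exists an irreducible complex representation ω_ψ of P on which every z ∈ Z(P) acts by the scalar ψ(z); any two such representations are isomorphic; and (dim ω_ψ)² = |P/Z(P)|. -/
universe u

open scoped commutatorElement

/-- A complex representation is irreducible if the space is nonzero and the
only invariant submodules are `⊥` and `⊤`. -/
def IsIrrep {G : Type*} [Group G] {V : Type*} [AddCommGroup V] [Module ℂ V]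
    (ρ : Representation ℂ G V) : Prop :=
  Nontrivial V ∧
    ∀ W : Submodule ℂ V, (∀ (g : G) (v : V), v ∈ W → ρ g v ∈ W) → W = ⊥ ∨ W = ⊤

/-- `ρ` has central character `ψ`: every element `z` of the center acts by the
scalar `ψ z`. -/
def HasCentralCharacter {P : Type*} [Group P] {V : Type*} [AddCommGroup V]
    [Module ℂ V] (ρ : Representation ℂ P V)
    (ψ : ↥(Subgroup.center P) →* ℂˣ) : Prop :=
  ∀ z : ↥(Subgroup.center P),
    ρ (z : P) = (((ψ z : ℂˣ) : ℂ) • LinearMap.id : V →ₗ[ℂ] V)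

/-!
For `x ∉ Z(P)` the map `g ↦ ⁅g, x⁆` is a homomorphism from `P` onto `Z(P)` (its image is a
nontrivial subgroup of a group of prime order), so `x` is conjugate to `z * x` for some `z` with
`ψ z ≠ 1`. Hence every representation with central character `ψ` has character vanishing off
`Z(P)`, and equal to `ψ · dim` on `Z(P)`. The character inner product of two such irreducible
representations is therefore `|Z(P)| · dim · dim' / |P| ≠ 0`, so by orthogonality of characters
they are isomorphic; for a single one the inner product is `1`, giving `|Z(P)| · dim² = |P|`.
An irreducible subrepresentation of the representation coinduced from `ψ` gives existence.
-/

section Irreducible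

variable {G U W : Type*} [Group G] [AddCommGroup U] [Module ℂ U] [AddCommGroup W] [Module ℂ W]
  {ρ : Representation ℂ G U}

theorem IsIrrep.isIrreducible (h : IsIrrep ρ) : ρ.IsIrreducible where
  exists_pair_ne := ⟨⊥, ⊤, fun hbt ↦ by
    have := h.1
    exact bot_ne_top (congrArg Subrepresentation.toSubmodule hbt)⟩
  eq_bot_or_eq_top N := (h.2 N.toSubmodule N.apply_mem_toSubmodule).imp
    (fun hN ↦ Subrepresentation.toSubmodule_injective hN)
    (fun hN ↦ Subrepresentation.toSubmodule_injective hN)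

theorem IsIrrep.finiteDimensional [Finite G] (h : IsIrrep ρ) : FiniteDimensional ℂ U := by
  have := h.isIrreducible
  have : Module.Finite ℂ ρ.asModule := Module.Finite.trans (MonoidAlgebra ℂ G) ρ.asModule
  exact Module.Finite.equiv ρ.asModuleEquiv

theorem exists_isIrrep_subrepresentation [FiniteDimensional ℂ U] [Nontrivial U]
    (ρ : Representation ℂ G U) : ∃ N : Subrepresentation ρ, IsIrrep N.toRepresentation := by
  have : WellFoundedLT (Subrepresentation ρ) :=
    StrictMono.wellFoundedLT (f := Subrepresentation.toSubmodule) fun _ _ h ↦ h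
  have htop : (⊤ : Subrepresentation ρ) ≠ ⊥ := fun h ↦
    bot_ne_top (congrArg Subrepresentation.toSubmodule h).symm
  obtain ⟨N, hN, -⟩ := (eq_bot_or_exists_atom_le (⊤ : Subrepresentation ρ)).resolve_left htop
  have hNbot : N.toSubmodule ≠ ⊥ := fun h ↦ hN.1 (Subrepresentation.toSubmodule_injective h)
  refine ⟨N, Submodule.nontrivial_iff_ne_bot.2 hNbot, fun W' hW' ↦ ?_⟩
  let M : Subrepresentation ρ := ⟨W'.map N.toSubmodule.subtype, by
    rintro g _ ⟨w, hw, rfl⟩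
    exact ⟨N.toRepresentation g w, hW' g w hw, rfl⟩⟩
  have hinj := Submodule.map_injective_of_injective N.toSubmodule.injective_subtype
  have hMN : M ≤ N := by rintro _ ⟨w, -, rfl⟩; exact w.2
  refine ((hN.le_iff (x := M)).1 hMN).imp (fun hM ↦ hinj ?_) (fun hM ↦ hinj ?_)
  · rw [Submodule.map_bot]; exact congrArg Subrepresentation.toSubmodule hM
  · rw [Submodule.map_subtype_top]; exact congrArg Subrepresentation.toSubmodule hM

theorem IsIrrep.conjRingEquiv (h : IsIrrep ρ) (e : U ≃ₗ[ℂ] W) :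
    IsIrrep (e.conjRingEquiv.toMonoidHom.comp ρ) := by
  have := h.1
  refine ⟨e.injective.nontrivial, fun W' hW' ↦ ?_⟩
  have hinv : ∀ (g : G) (v : U), v ∈ W'.comap e.toLinearMap → ρ g v ∈ W'.comap e.toLinearMap :=
    fun g v hv ↦ by simpa using hW' g (e v) hv
  have hW : W' = (W'.comap e.toLinearMap).map e.toLinearMap :=
    (Submodule.map_comap_eq_of_surjective e.surjective W').symm
  rcases h.2 _ hinv with h0 | h0 <;> rw [hW, h0] <;> simp

end Irreducible

section CommutatorsCentral

variable {P : Type*} [Group P]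

theorem commutatorElement_mul_left_of_mem_center_s5 {g h x : P}
    (hhx : ⁅h, x⁆ ∈ Subgroup.center P) : ⁅g * h, x⁆ = ⁅g, x⁆ * ⁅h, x⁆ := by
  have hc := Subgroup.mem_center_iff.1 hhx
  calc ⁅g * h, x⁆ = g * ⁅h, x⁆ * (x * g⁻¹ * x⁻¹) := by group
    _ = ⁅g, x⁆ * ⁅h, x⁆ := by rw [hc g, hc ⁅g, x⁆]; group

theorem exists_commutatorElement_eq_of_notMem_center (hZ : (Nat.card (Subgroup.center P)).Prime)
    (hcomm : ∀ x y : P, ⁅x, y⁆ ∈ Subgroup.center P) {x : P} (hx : x ∉ Subgroup.center P)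
    (z : Subgroup.center P) : ∃ g : P, ⁅g, x⁆ = z := by
  let φ : P →* Subgroup.center P := MonoidHom.mk' (fun g ↦ ⟨⁅g, x⁆, hcomm g x⟩)
    fun _ h ↦ Subtype.ext (commutatorElement_mul_left_of_mem_center_s5 (hcomm h x))
  have : Fact (Nat.card (Subgroup.center P)).Prime := ⟨hZ⟩
  obtain hφ | hφ := Subgroup.eq_bot_or_eq_top_of_prime_card φ.range
  · refine absurd (Subgroup.mem_center_iff.2 fun g ↦ ?_) hx
    have hg : φ g ∈ φ.range := ⟨g, rfl⟩
    rw [hφ, Subgroup.mem_bot] at hg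
    exact commutatorElement_eq_one_iff_mul_comm.1 (congrArg Subtype.val hg)
  · obtain ⟨g, hg⟩ := hφ ▸ Subgroup.mem_top z
    exact ⟨g, congrArg Subtype.val hg⟩

end CommutatorsCentral

section CentralCharacter

variable {P V W : Type*} [Group P] [AddCommGroup V] [Module ℂ V] [AddCommGroup W] [Module ℂ W]
  {ψ : Subgroup.center P →* ℂˣ} {ρ : Representation ℂ P V} {σ : Representation ℂ P W}

theorem HasCentralCharacter.subrepresentation (hρ : HasCentralCharacter ρ ψ)
    (N : Subrepresentation ρ) : HasCentralCharacter N.toRepresentation ψ := fun z ↦ by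
  ext v
  simp [Subrepresentation.toRepresentation, hρ z]

theorem HasCentralCharacter.conjRingEquiv (hρ : HasCentralCharacter ρ ψ) (e : V ≃ₗ[ℂ] W) :
    HasCentralCharacter (e.conjRingEquiv.toMonoidHom.comp ρ) ψ := fun z ↦ by
  ext w
  simp [hρ z]

theorem HasCentralCharacter.exists_isIrrep_fin [FiniteDimensional ℂ V] [Nontrivial V]
    (hρ : HasCentralCharacter ρ ψ) :
    ∃ (n : ℕ) (ω : Representation ℂ P (Fin n → ℂ)), IsIrrep ω ∧ HasCentralCharacter ω ψ := by
  obtain ⟨N, hN⟩ := exists_isIrrep_subrepresentation ρ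
  let e := (Module.finBasis ℂ N.toSubmodule).equivFun
  exact ⟨_, _, hN.conjRingEquiv e, (hρ.subrepresentation N).conjRingEquiv e⟩

theorem HasCentralCharacter.character_eq_zero_of_notMem_center
    (hZ : (Nat.card (Subgroup.center P)).Prime) (hcomm : ∀ x y : P, ⁅x, y⁆ ∈ Subgroup.center P)
    (hψ : ψ ≠ 1) (hρ : HasCentralCharacter ρ ψ) {x : P} (hx : x ∉ Subgroup.center P) :
    ρ.character x = 0 := by
  obtain ⟨z, hz⟩ := DFunLike.ne_iff.1 hψ
  obtain ⟨g, hg⟩ := exists_commutatorElement_eq_of_notMem_center hZ hcomm hx z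
  have hconj : g * x * g⁻¹ = z * x := by rw [← hg]; group
  have hfix : ρ.character x = ψ z * ρ.character x := by
    calc ρ.character x = ρ.character (g * x * g⁻¹) := (ρ.char_conj x g).symm
      _ = ψ z * ρ.character x := by
        rw [hconj, Representation.character, map_mul, hρ z, Module.End.mul_eq_comp,
          LinearMap.smul_comp, LinearMap.id_comp, map_smul, smul_eq_mul, Representation.character]
  have hz' : (ψ z : ℂ) - 1 ≠ 0 := sub_ne_zero.2 (mt Units.val_eq_one.1 hz)
  have hfix' : ((ψ z : ℂ) - 1) * ρ.character x = 0 := by linear_combination -hfix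
  exact (mul_eq_zero.1 hfix').resolve_left hz'

section Character

variable [FiniteDimensional ℂ V] [FiniteDimensional ℂ W]

theorem HasCentralCharacter.character_coe (hρ : HasCentralCharacter ρ ψ)
    (z : Subgroup.center P) : ρ.character z = ψ z * Module.finrank ℂ V := by
  rw [Representation.character, hρ z, map_smul, LinearMap.trace_id, smul_eq_mul]

theorem sum_character_mul_character_inv [Fintype P] (hZ : (Nat.card (Subgroup.center P)).Prime)
    (hcomm : ∀ x y : P, ⁅x, y⁆ ∈ Subgroup.center P) (hψ : ψ ≠ 1)
    (hρ : HasCentralCharacter ρ ψ) (hσ : HasCentralCharacter σ ψ) :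
    ∑ g : P, ρ.character g * σ.character g⁻¹ =
      Nat.card (Subgroup.center P) * (Module.finrank ℂ V * Module.finrank ℂ W) := by
  classical
  have hoff : ∑ x : {x // x ∉ Subgroup.center P}, ρ.character x * σ.character (x : P)⁻¹ = 0 :=
    Finset.sum_eq_zero fun x _ ↦ by
      rw [hρ.character_eq_zero_of_notMem_center hZ hcomm hψ x.2, zero_mul]
  rw [← Fintype.sum_subtype_add_sum_subtype (· ∈ Subgroup.center P), hoff, add_zero]
  calc ∑ z : Subgroup.center P, ρ.character z * σ.character (z : P)⁻¹
      = ∑ _z : Subgroup.center P, (Module.finrank ℂ V * Module.finrank ℂ W : ℂ) :=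
        Finset.sum_congr rfl fun z _ ↦ by
          rw [← Subgroup.coe_inv, hρ.character_coe, hσ.character_coe, map_inv]
          linear_combination (Module.finrank ℂ V * Module.finrank ℂ W : ℂ) * Units.mul_inv (ψ z)
    _ = _ := by simp [Nat.card_eq_fintype_card]

end Character

variable [Finite P]

theorem IsIrrep.nonempty_equiv (hZ : (Nat.card (Subgroup.center P)).Prime)
    (hcomm : ∀ x y : P, ⁅x, y⁆ ∈ Subgroup.center P) (hψ : ψ ≠ 1) (hρ : IsIrrep ρ)
    (hσ : IsIrrep σ) (hρψ : HasCentralCharacter ρ ψ) (hσψ : HasCentralCharacter σ ψ) :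
    Nonempty (ρ.Equiv σ) := by
  have := Fintype.ofFinite P
  have := hρ.finiteDimensional
  have := hσ.finiteDimensional
  have := hρ.1
  have := hσ.1
  have := hρ.isIrreducible
  have := hσ.isIrreducible
  have := invertibleOfNonzero (Nat.cast_ne_zero.2 Nat.card_pos.ne' : (Nat.card P : ℂ) ≠ 0)
  by_contra h
  have horth := Representation.char_orthonormal σ ρ
  rw [if_neg h, sum_character_mul_character_inv hZ hcomm hψ hσψ hρψ] at horth
  simp [Module.finrank_pos.ne', hZ.ne_zero] at horth

theorem IsIrrep.card_center_mul_finrank_sq (hZ : (Nat.card (Subgroup.center P)).Prime)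
    (hcomm : ∀ x y : P, ⁅x, y⁆ ∈ Subgroup.center P) (hψ : ψ ≠ 1) (hρ : IsIrrep ρ)
    (hρψ : HasCentralCharacter ρ ψ) :
    Nat.card (Subgroup.center P) * Module.finrank ℂ V ^ 2 = Nat.card P := by
  have := Fintype.ofFinite P
  have := hρ.finiteDimensional
  have := hρ.isIrreducible
  have hP : (Nat.card P : ℂ) ≠ 0 := Nat.cast_ne_zero.2 Nat.card_pos.ne'
  have := invertibleOfNonzero hP
  have horth := Representation.char_orthonormal ρ ρ
  rw [if_pos ⟨.refl ρ⟩, sum_character_mul_character_inv hZ hcomm hψ hρψ hρψ] at horth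
  field_simp at horth
  exact_mod_cast horth

end CentralCharacter

section Model

variable {P : Type*} [Group P] (ψ : Subgroup.center P →* ℂˣ)

/-- `ψ` as a one-dimensional representation of `Z(P)`, coinduced to `P`: the functions
`f : P → ℂ` with `f (z * x) = ψ z * f x`, on which `P` acts by right translation. -/
abbrev coindCenterV : Submodule ℂ (P → ℂ) :=
  Representation.coindV (Subgroup.center P).subtype ((DistribMulAction.toModuleEnd ℂ ℂ).comp ψ)

noncomputable abbrev coindCenter : Representation ℂ P (coindCenterV ψ) :=
  Representation.coind (Subgroup.center P).subtype ((DistribMulAction.toModuleEnd ℂ ℂ).comp ψ)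

theorem nontrivial_coindCenterV : Nontrivial (coindCenterV ψ) := by
  classical
  let f : P → ℂ := fun x ↦ if hx : x ∈ Subgroup.center P then ψ ⟨x, hx⟩ else 0
  have hf : f ∈ coindCenterV ψ := by
    intro z x
    change f (z * x) = ψ z * f x
    by_cases hx : x ∈ Subgroup.center P
    · have hzx : (z : P) * x ∈ Subgroup.center P := mul_mem z.2 hx
      simp only [f, dif_pos hx, dif_pos hzx]
      rw [← Units.val_mul, ← map_mul]
      rfl
    · have hzx : (z : P) * x ∉ Subgroup.center P := fun h ↦
        hx (by simpa using mul_mem (inv_mem z.2) h)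
      simp [f, hx, hzx]
  refine ⟨⟨⟨f, hf⟩, 0, fun h ↦ ?_⟩⟩
  have h1 := congrFun (congrArg Subtype.val h) 1
  simp [f] at h1

theorem hasCentralCharacter_coindCenter : HasCentralCharacter (coindCenter ψ) ψ := fun z ↦ by
  ext f x
  change f.1 (x * z) = ψ z * f.1 x
  rw [Subgroup.mem_center_iff.1 z.2 x]
  exact f.2 z x

theorem exists_isIrrep_hasCentralCharacter_fin [Finite P] :
    ∃ (n : ℕ) (ω : Representation ℂ P (Fin n → ℂ)), IsIrrep ω ∧ HasCentralCharacter ω ψ :=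
  have := nontrivial_coindCenterV ψ
  (hasCentralCharacter_coindCenter ψ).exists_isIrrep_fin

end Model

/-- Stone–von Neumann: for a Heisenberg `𝔽_p`-group `P` and a nontrivial
character `ψ` of its center, there is an irreducible complex representation of
`P` on which the center acts by `ψ`; any two such are isomorphic; and its
dimension squares to `|P/Z(P)|`. -/
theorem stmt_5 (p : ℕ) (hp : p.Prime) (P : Type*) [Group P] [Finite P]
    (hP : IsHeisenberg p P)
    (ψ : ↥(Subgroup.center P) →* ℂˣ) (hψ : ψ ≠ 1) :
    ∃ (V : Type) (_ : AddCommGroup V) (_ : Module ℂ V)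
      (ω : Representation ℂ P V),
      FiniteDimensional ℂ V ∧ IsIrrep ω ∧ HasCentralCharacter ω ψ ∧
      (∀ (V' : Type u) (_ : AddCommGroup V') (_ : Module ℂ V')
          (ω' : Representation ℂ P V'),
          IsIrrep ω' → HasCentralCharacter ω' ψ →
          ∃ e : V ≃ₗ[ℂ] V', ∀ (g : P) (v : V), e (ω g v) = ω' g (e v)) ∧
      Module.finrank ℂ V ^ 2 = Nat.card (P ⧸ Subgroup.center P) := by
  have hZ : (Nat.card (Subgroup.center P)).Prime := hP.card_center ▸ hp
  obtain ⟨n, ω, hω, hωψ⟩ := exists_isIrrep_hasCentralCharacter_fin ψ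
  refine ⟨Fin n → ℂ, _, _, ω, inferInstance, hω, hωψ, fun V' _ _ ω' hω' hω'ψ ↦ ?_, ?_⟩
  · obtain ⟨e⟩ := hω.nonempty_equiv hZ hP.commutator_mem hψ hω' hωψ hω'ψ
    exact ⟨e.toLinearEquiv, e.isIntertwining⟩
  · have hdim := hω.card_center_mul_finrank_sq hZ hP.commutator_mem hψ hωψ
    rw [Subgroup.card_eq_card_quotient_mul_card_subgroup (Subgroup.center P),
      mul_comm (Nat.card (P ⧸ _))] at hdim
    exact Nat.eq_of_mul_eq_mul_left hZ.pos hdim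
end

section
/- Let p be an odd prime, let P be a Heisenberg 𝔽_p-group, and let ψ : Z(P) → ℂˣ be a nontrivial character. Then the Heisenberg representation ω_ψ is not isomorphic to its dual (contragredient) representation; indeed, the dual of ω_ψ is isomorphic to ω_{ψ⁻¹}, and ψ⁻¹ ≠ ψ. -/
universe u

open scoped commutatorElement

/-!
The dual of `ω_ψ` is irreducible with central character `ψ⁻¹`, and `ψ⁻¹ ≠ ψ` because `ψ` takes
values of odd order `p`; an isomorphism `ω_ψ^∨ ≅ ω_ψ` would identify the two central characters.
Uniqueness of the Heisenberg representation with a given central character comes from character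
theory: since `ψ` is faithful and commutators are central, a representation with central character
`ψ` has character vanishing off `Z(P)`, so two such representations have nonzero character inner
product and are therefore isomorphic by Schur's lemma.
-/

open Module Representation

section CentralCharacter

variable {Z : Type*} [Group Z]

theorem MonoidHom.injective_of_ne_one_of_card_prime {M : Type*} [MulOneClass M] (hZ : (Nat.card Z).Prime) {f : Z →* M}
    (hf : f ≠ 1) : Function.Injective f :=
  have : Fact (Nat.card Z).Prime := ⟨hZ⟩
  f.ker.eq_bot_or_eq_top_of_prime_card.elim f.ker_eq_bot_iff.mp
    fun h ↦ absurd (f.ker_eq_top_iff.mp h) hf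

theorem MonoidHom.inv_ne_self_of_odd_card {M : Type*} [CommGroup M] (hZ : Odd (Nat.card Z)) {f : Z →* M} (hf : f ≠ 1) :
    f⁻¹ ≠ f := by
  intro hinv
  refine hf (MonoidHom.ext fun z ↦ ?_)
  have hsq : f z ^ 2 = 1 := by
    rw [sq, ← inv_eq_iff_mul_eq_one]
    exact DFunLike.congr_fun hinv z
  have hcard : f z ^ Nat.card Z = 1 := by rw [← map_pow, pow_card_eq_one', map_one]
  simpa [Nat.coprime_two_left.mpr hZ] using pow_gcd_eq_one.mpr ⟨hsq, hcard⟩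

end CentralCharacter

section

variable {G V W : Type*} [Group G] [AddCommGroup V] [Module ℂ V] [AddCommGroup W] [Module ℂ W]
  {ρ : Representation ℂ G V} {σ : Representation ℂ G W}

namespace IsIrrep

theorem isIrreducible_s8 (h : IsIrrep ρ) : ρ.IsIrreducible := by
  obtain ⟨hnt, hsub⟩ := h
  have : Nontrivial (Subrepresentation ρ) :=
    ⟨⊥, ⊤, fun h ↦ bot_ne_top (congrArg Subrepresentation.toSubmodule h)⟩
  exact ⟨fun σ ↦ (hsub σ.toSubmodule σ.apply_mem_toSubmodule).imp
    (fun h ↦ Subrepresentation.toSubmodule_injective h)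
    (fun h ↦ Subrepresentation.toSubmodule_injective h)⟩

theorem finiteDimensional_s8 [Finite G] (h : IsIrrep ρ) : FiniteDimensional ℂ V := by
  obtain ⟨hnt, hsub⟩ := h
  obtain ⟨v, hv⟩ := exists_ne (0 : V)
  set U := Submodule.span ℂ (Set.range fun g ↦ ρ g v)
  have hU : ∀ (g : G) (u : V), u ∈ U → ρ g u ∈ U := fun g u hu ↦ by
    have : U.map (ρ g) ≤ U := by
      rw [Submodule.map_span_le]
      rintro _ ⟨h, rfl⟩
      exact Submodule.subset_span ⟨g * h, by simp⟩
    exact this ⟨u, hu, rfl⟩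
  have hvU : v ∈ U := Submodule.subset_span ⟨1, by simp⟩
  have hUtop : U = ⊤ := (hsub U hU).resolve_left fun h ↦ hv (by simpa [h] using hvU)
  exact Module.finite_def.mpr (hUtop ▸ Submodule.fg_span (Set.finite_range _))

theorem dual [FiniteDimensional ℂ V] (h : IsIrrep ρ) : IsIrrep ρ.dual := by
  obtain ⟨hnt, hsub⟩ := h
  refine ⟨inferInstance, fun Φ hΦ ↦ ?_⟩
  have hinv : ∀ (g : G) (v : V), v ∈ Φ.dualCoannihilator → ρ g v ∈ Φ.dualCoannihilator := by
    intro g v hv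
    rw [Submodule.mem_dualCoannihilator] at hv ⊢
    intro f hf
    simpa [Representation.dual_apply, Dual.transpose_apply] using hv _ (hΦ g⁻¹ f hf)
  rw [← Subspace.dualCoannihilator_dualAnnihilator_eq (W := Φ)]
  rcases hsub _ hinv with h | h <;> simp [h]

end IsIrrep

namespace HasCentralCharacter

variable {φ φ' : Subgroup.center G →* ℂˣ}

theorem dual (h : HasCentralCharacter ρ φ) : HasCentralCharacter ρ.dual φ⁻¹ := by
  intro z
  ext f v
  have hz := h z⁻¹
  simp only [Subgroup.coe_inv] at hz
  simp [Representation.dual_apply, Dual.transpose_apply, hz]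

theorem eq_of_linearEquiv [Nontrivial V] (hρ : HasCentralCharacter ρ φ)
    (hσ : HasCentralCharacter σ φ') (e : V ≃ₗ[ℂ] W) (he : ∀ g v, e (ρ g v) = σ g (e v)) :
    φ = φ' := by
  obtain ⟨v, hv⟩ := exists_ne (0 : V)
  ext z
  have := he z v
  rw [hρ z, hσ z] at this
  simp only [LinearMap.smul_apply, LinearMap.id_apply, map_smul] at this
  exact smul_left_injective ℂ (e.map_ne_zero_iff.mpr hv) this

theorem character_of_mem_center [FiniteDimensional ℂ V] (h : HasCentralCharacter ρ φ)
    (z : Subgroup.center G) :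
    ρ.character z = finrank ℂ V * φ z := by
  simp [character, h z, mul_comm]

theorem character_eq_zero (h : HasCentralCharacter ρ φ) (hφ : Function.Injective φ)
    (hcomm : ∀ x y : G, ⁅x, y⁆ ∈ Subgroup.center G) {g : G} (hg : g ∉ Subgroup.center G) :
    ρ.character g = 0 := by
  obtain ⟨y, hy⟩ : ∃ y, y * g ≠ g * y := by
    simpa [Subgroup.mem_center_iff] using hg
  set c : Subgroup.center G := ⟨⁅y, g⁆, hcomm y g⟩
  have hc : (φ c : ℂ) ≠ 1 := fun h1 ↦ by
    have : c = 1 := hφ (Units.ext (by simpa using h1))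
    exact hy (commutatorElement_eq_one_iff_commute.mp (congrArg Subtype.val this)).eq
  have hconj : ρ.character g = φ c * ρ.character g := by
    conv_lhs => rw [← char_conj ρ g y]
    rw [show y * g * y⁻¹ = c * g by simp [c, commutatorElement_def]]
    simp [character, h c, Module.End.mul_eq_comp]
  have : (1 - (φ c : ℂ)) * ρ.character g = 0 := by linear_combination hconj
  exact (mul_eq_zero.mp this).resolve_left (sub_ne_zero.mpr hc.symm)

end HasCentralCharacter

section Uniqueness

variable [FiniteDimensional ℂ V] [FiniteDimensional ℂ W] {φ : Subgroup.center G →* ℂˣ}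

theorem sum_character_mul_character_inv_of_hasCentralCharacter [Fintype G]
    (hcomm : ∀ x y : G, ⁅x, y⁆ ∈ Subgroup.center G) (hφ : Function.Injective φ)
    (hρ : HasCentralCharacter ρ φ) (hσ : HasCentralCharacter σ φ) :
    ∑ g : G, σ.character g * ρ.character g⁻¹ =
      Nat.card (Subgroup.center G) * (finrank ℂ V * finrank ℂ W) := by
  classical
  have hoff : ∑ g : {g // g ∉ Subgroup.center G}, σ.character g * ρ.character (g : G)⁻¹ = 0 :=
    Finset.sum_eq_zero fun g _ ↦ by rw [hσ.character_eq_zero hφ hcomm g.2, zero_mul]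
  rw [← Fintype.sum_subtype_add_sum_subtype (· ∈ Subgroup.center G), hoff, add_zero]
  have hterm (z : Subgroup.center G) :
      σ.character z * ρ.character (z : G)⁻¹ = finrank ℂ V * finrank ℂ W := by
    rw [← Subgroup.coe_inv, hσ.character_of_mem_center, hρ.character_of_mem_center, map_inv,
      Units.val_inv_eq_inv_val]
    field_simp
  simp [hterm, Nat.card_eq_fintype_card]

theorem nonempty_equiv_of_hasCentralCharacter [Finite G]
    (hcomm : ∀ x y : G, ⁅x, y⁆ ∈ Subgroup.center G) (hφ : Function.Injective φ)
    (hρ : IsIrrep ρ) (hσ : IsIrrep σ) (hρφ : HasCentralCharacter ρ φ)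
    (hσφ : HasCentralCharacter σ φ) : Nonempty (ρ.Equiv σ) := by
  have := Fintype.ofFinite G
  have := hρ.isIrreducible_s8
  have := hσ.isIrreducible_s8
  have := hρ.1
  have := hσ.1
  have : Invertible (Nat.card G : ℂ) := invertibleOfNonzero (by simp)
  have : Nontrivial (IntertwiningMap ρ σ) := by
    refine Module.nontrivial_of_finrank_pos (R := ℂ) (Nat.pos_of_ne_zero fun h ↦ ?_)
    have := card_inv_mul_sum_char_mul_char_eq_finrank ρ σ
    rw [sum_character_mul_character_inv_of_hasCentralCharacter hcomm hφ hρφ hσφ, h] at this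
    simp [finrank_pos.ne', Nat.card_pos.ne'] at this
  obtain ⟨f, hf⟩ := exists_ne (0 : IntertwiningMap ρ σ)
  exact ⟨f.ofBijective ((IsIrreducible.bijective_or_eq_zero f).resolve_right hf)⟩

end Uniqueness

end

/-- For `p` an odd prime, a Heisenberg `𝔽_p`-group `P`, a nontrivial central
character `ψ`, and `ω` the Heisenberg representation attached to `ψ`
(an irreducible representation with central character `ψ`): the dual
(contragredient) representation `ω.dual` is not isomorphic to `ω`; the dual is
isomorphic to the Heisenberg representation `ω_{ψ⁻¹}`; and `ψ⁻¹ ≠ ψ`. -/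
theorem stmt_8 (p : ℕ) (hp : p.Prime) (hodd : p ≠ 2)
    (P : Type*) [Group P] [Finite P] (hP : IsHeisenberg p P)
    (ψ : ↥(Subgroup.center P) →* ℂˣ) (hψ : ψ ≠ 1)
    (V : Type*) [AddCommGroup V] [Module ℂ V] (ω : Representation ℂ P V)
    (hirr : IsIrrep ω) (hcent : HasCentralCharacter ω ψ) :
    (¬ ∃ e : Module.Dual ℂ V ≃ₗ[ℂ] V,
        ∀ (g : P) (f : Module.Dual ℂ V), e (ω.dual g f) = ω g (e f)) ∧
    (∀ (V' : Type u) (_ : AddCommGroup V') (_ : Module ℂ V')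
        (ω' : Representation ℂ P V'),
        IsIrrep ω' → HasCentralCharacter ω' ψ⁻¹ →
        ∃ e : Module.Dual ℂ V ≃ₗ[ℂ] V',
          ∀ (g : P) (f : Module.Dual ℂ V), e (ω.dual g f) = ω' g (e f)) ∧
    ψ⁻¹ ≠ ψ := by
  have hψinv : ψ⁻¹ ≠ ψ :=
    MonoidHom.inv_ne_self_of_odd_card (hP.card_center ▸ hp.odd_of_ne_two hodd) hψ
  have hψinv_inj : Function.Injective ψ⁻¹ := fun _ _ h ↦
    MonoidHom.injective_of_ne_one_of_card_prime (hP.card_center ▸ hp) hψ (inv_injective h)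
  have := hirr.finiteDimensional_s8
  have := hirr.1
  refine ⟨fun ⟨e, he⟩ ↦ hψinv (hcent.dual.eq_of_linearEquiv hcent e he), ?_, hψinv⟩
  intro V' _ _ ω' hirr' hcent'
  have := hirr'.finiteDimensional_s8
  obtain ⟨φ⟩ := nonempty_equiv_of_hasCentralCharacter hP.commutator_mem hψinv_inj hirr.dual hirr'
    hcent.dual hcent'
  exact ⟨φ.toLinearEquiv, φ.isIntertwining⟩
end

section
/- Let A be a finite group, let W be a finite-dimensional right module over the quaternions ℍ, and let ρ₁, ρ₂ : A → GL_ℍ(W) be homomorphisms into the group of ℍ-linear automorphisms of W. Fix an ℝ-algebra embedding ℂ ↪ ℍ and view W as a complex vector space by restriction of scalars. Suppose the resulting complex representations of A underlying ρ₁ and ρ₂ are irreducible and isomorphic as complex representations. Then ρ₁ and ρ₂ are isomorphic as ℍ-linear representations, i.e., there exists an ℍ-linear automorphism T of W with T ∘ ρ₁(a) = ρ₂(a) ∘ T for all a ∈ A. -/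
/-!
Pick a unit quaternion `j` anticommuting with `φ i`. Right multiplication by `j` is a
conjugate-linear map `J` of the complex space `W` with `J² = -1`, and `ℍ = φ ℂ + j φ ℂ`, so a
ℂ-linear map is ℍ-linear as soon as it commutes with `J`. If `e` is a ℂ-linear isomorphism
intertwining `ρ₁` and `ρ₂`, so is `J e J`; since the complex representation is irreducible and,
`A` being finite, finite-dimensional, Schur's lemma gives `J e J = c e`. Applying this twice
shows `|c| = 1`, and then `μ e` commutes with `J` for `μ² = -c`.
-/

open ComplexConjugate Quaternion
open scoped MonoidAlgebra

namespace Representation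

variable {k G V W : Type*} [Field k] [Monoid G] [AddCommGroup V] [Module k V]
  [AddCommGroup W] [Module k W]

theorem isIrreducible_of_forall_submodule [Nontrivial V] (ρ : Representation k G V)
    (h : ∀ U : Submodule k V, (∀ (g : G) (v : V), v ∈ U → ρ g v ∈ U) → U = ⊥ ∨ U = ⊤) :
    ρ.IsIrreducible where
  exists_pair_ne := ⟨⊥, ⊤, fun h => bot_ne_top (congrArg Subrepresentation.toSubmodule h)⟩
  eq_bot_or_eq_top U := (h U.toSubmodule fun g _ hv => U.apply_mem_toSubmodule g hv).imp
    Subrepresentation.ext Subrepresentation.ext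

theorem finiteDimensional_of_isIrreducible [Finite G] (ρ : Representation k G V)
    [ρ.IsIrreducible] : FiniteDimensional k V :=
  have : Module.Finite k ρ.asModule := .trans k[G] ρ.asModule
  .equiv ρ.asModuleEquiv

theorem IsIrreducible.exists_eq_smul [IsAlgClosed k] [FiniteDimensional k W]
    {ρ : Representation k G V} {σ : Representation k G W} [σ.IsIrreducible]
    (e : ρ.Equiv σ) (f : IntertwiningMap ρ σ) : ∃ c : k, ∀ v, f v = c • e v := by
  obtain ⟨c, hc⟩ := IsIrreducible.algebraMap_intertwiningMap_bijective_of_isAlgClosed.2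
    (f.comp e.symm.toIntertwiningMap)
  refine ⟨c, fun v => ?_⟩
  simpa using (congrArg (· (e v)) hc).symm

end Representation

section ConjLinear

variable {V W : Type*} [AddCommGroup V] [Module ℂ V] [AddCommGroup W] [Module ℂ W]
  {J₁ : V →ₗ⋆[ℂ] V} {J₂ : W →ₗ⋆[ℂ] W} {e : V →ₗ[ℂ] W} {c : ℂ}

theorem apply_conjLinear_eq_neg_conj_smul (hJ₂ : ∀ w, J₂ (J₂ w) = -w)
    (h : ∀ v, J₂ (e (J₁ v)) = c • e v) (v : V) : e (J₁ v) = -(conj c • J₂ (e v)) := by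
  rw [← map_smulₛₗ, ← h, hJ₂, neg_neg]

theorem norm_eq_one_of_conjLinear_comp_eq_smul [Nontrivial V] (hJ₁ : ∀ v, J₁ (J₁ v) = -v)
    (hJ₂ : ∀ w, J₂ (J₂ w) = -w) (he : Function.Injective e)
    (h : ∀ v, J₂ (e (J₁ v)) = c • e v) : ‖c‖ = 1 := by
  obtain ⟨v, hv⟩ := exists_ne (0 : V)
  have hJe : J₂ (e v) ≠ 0 := fun h0 =>
    hv <| he <| by rw [map_zero, ← neg_eq_zero, ← hJ₂, h0, map_zero]
  have key : (c * conj c) • J₂ (e v) = J₂ (e v) := by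
    have := h (J₁ v)
    rwa [hJ₁, map_neg, map_neg, apply_conjLinear_eq_neg_conj_smul hJ₂ h, smul_neg, neg_inj,
      smul_smul, eq_comm] at this
  have hc : c * conj c = 1 := by
    rw [← sub_eq_zero, ← smul_eq_zero_iff_left hJe, sub_smul, one_smul, key, sub_self]
  rwa [Complex.mul_conj', ← Complex.ofReal_pow, Complex.ofReal_eq_one,
    pow_eq_one_iff_of_nonneg (norm_nonneg c) two_ne_zero] at hc

theorem exists_smul_commute_conjLinear [Nontrivial V] (hJ₁ : ∀ v, J₁ (J₁ v) = -v)
    (hJ₂ : ∀ w, J₂ (J₂ w) = -w) (he : Function.Injective e)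
    (h : ∀ v, J₂ (e (J₁ v)) = c • e v) : ∃ μ : ℂ, μ ≠ 0 ∧ ∀ v, μ • e (J₁ v) = J₂ (μ • e v) := by
  obtain ⟨μ, hμ⟩ := IsAlgClosed.exists_pow_nat_eq (-c) two_pos
  have hμ1 : μ * conj μ = 1 := by
    rw [Complex.mul_conj', ← Complex.ofReal_pow, ← norm_pow, hμ, norm_neg,
      norm_eq_one_of_conjLinear_comp_eq_smul hJ₁ hJ₂ he h, Complex.ofReal_one]
  have hc : conj c = -conj μ ^ 2 := by rw [← map_pow, hμ, map_neg, neg_neg]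
  refine ⟨μ, left_ne_zero_of_mul_eq_one hμ1, fun v => ?_⟩
  rw [apply_conjLinear_eq_neg_conj_smul hJ₂ h, map_smulₛₗ, smul_neg, smul_smul, ← neg_smul]
  congr 1
  linear_combination (-μ) * hc + conj μ * hμ1

end ConjLinear

theorem Quaternion.exists_mul_self_eq_neg_one_anticommute (q : ℍ[ℝ]) (hq : q * q = -1) :
    ∃ j : ℍ[ℝ], j * j = -1 ∧ q * j = -(j * q) := by
  have hre := congrArg QuaternionAlgebra.re hq
  have hI := congrArg QuaternionAlgebra.imI hq
  have hJ := congrArg QuaternionAlgebra.imJ hq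
  have hK := congrArg QuaternionAlgebra.imK hq
  simp only [re_mul, imI_mul, imJ_mul, imK_mul, re_neg, imI_neg, imJ_neg, imK_neg, re_one, imI_one,
    imJ_one, imK_one] at hre hI hJ hK
  have hq0 : q.re = 0 := by nlinarith [sq_nonneg q.re]
  have hq1 : q.imI ^ 2 + q.imJ ^ 2 + q.imK ^ 2 = 1 := by nlinarith
  -- `j` is a unit vector orthogonal to `q` in the space of pure quaternions
  obtain ⟨j, hjre, hjq, hj1⟩ : ∃ j : ℍ[ℝ], j.re = 0 ∧
      j.imI * q.imI + j.imJ * q.imJ + j.imK * q.imK = 0 ∧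
      j.imI ^ 2 + j.imJ ^ 2 + j.imK ^ 2 = 1 := by
    by_cases hJK : q.imJ = 0 ∧ q.imK = 0
    · exact ⟨⟨0, 0, 1, 0⟩, rfl, by simp [hJK.1], by norm_num⟩
    · have hpos : 0 < q.imJ ^ 2 + q.imK ^ 2 := by
        rcases not_and_or.mp hJK with h | h <;> positivity
      set t := √(q.imJ ^ 2 + q.imK ^ 2)
      have ht : t ^ 2 = q.imJ ^ 2 + q.imK ^ 2 := Real.sq_sqrt hpos.le
      have : t ≠ 0 := (Real.sqrt_pos.mpr hpos).ne'
      refine ⟨⟨0, 0, q.imK / t, -q.imJ / t⟩, rfl, by ring, ?_⟩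
      field_simp
      linarith
  refine ⟨j, ?_, ?_⟩ <;> ext <;>
    simp only [re_mul, imI_mul, imJ_mul, imK_mul, re_neg, imI_neg, imJ_neg, imK_neg, re_one,
      imI_one, imJ_one, imK_one, hjre, hq0] <;>
    linarith

theorem AlgHom.apply_mul_eq_mul_apply_conj {A : Type*} [Ring A] [Algebra ℝ A] (φ : ℂ →ₐ[ℝ] A)
    {j : A} (hj : φ Complex.I * j = -(j * φ Complex.I)) (c : ℂ) :
    φ c * j = j * φ (conj c) := by
  have hφ (z : ℂ) : φ z = algebraMap ℝ A z.re + z.im • φ Complex.I := by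
    conv_lhs => rw [← Complex.lift.apply_symm_apply φ]
    rfl
  rw [hφ c, hφ (conj c), Complex.conj_re, Complex.conj_im, add_mul, mul_add, Algebra.commutes,
    smul_mul_assoc, hj, neg_smul, mul_neg, mul_smul_comm, smul_neg]

theorem Quaternion.exists_eq_add_mul (φ : ℂ →ₐ[ℝ] ℍ[ℝ]) {j : ℍ[ℝ]} (hj : j ≠ 0)
    (hφj : ∀ c, φ c * j = j * φ (conj c)) (h : ℍ[ℝ]) : ∃ c₁ c₂ : ℂ, h = φ c₁ + j * φ c₂ := by
  let L : ℂ × ℂ →ₗ[ℝ] ℍ[ℝ] := φ.toLinearMap.coprod ((LinearMap.mulLeft ℝ j) ∘ₗ φ.toLinearMap)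
  have hL (c : ℂ × ℂ) : L c = φ c.1 + j * φ c.2 := rfl
  have hinj : Function.Injective L := by
    refine (injective_iff_map_eq_zero L).2 fun ⟨c₁, c₂⟩ h0 => ?_
    rw [hL, add_eq_zero_iff_eq_neg] at h0
    have hφinj : Function.Injective φ := φ.toRingHom.injective
    -- `φ c₁` commutes with `φ I` while `j * φ c₂` anticommutes with it
    have hx : j * φ c₂ = 0 := by
      have h1 : φ Complex.I * (j * φ c₂) = -((j * φ c₂) * φ Complex.I) := by
        rw [← mul_assoc, hφj, Complex.conj_I, map_neg, mul_neg, neg_mul, mul_assoc, ← map_mul,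
          mul_comm, map_mul, mul_assoc]
      have h2 : φ Complex.I * (j * φ c₂) = (j * φ c₂) * φ Complex.I := by
        rw [← neg_eq_iff_eq_neg.mpr h0, mul_neg, neg_mul, ← map_mul, ← map_mul, mul_comm]
      rw [h2, eq_neg_iff_add_eq_zero, ← mul_add, ← map_add] at h1
      exact (mul_eq_zero.mp h1).resolve_right
        ((map_ne_zero_iff φ hφinj).mpr (by simp [Complex.ext_iff]))
    rw [hx, neg_zero, map_eq_zero_iff φ hφinj] at h0
    rw [mul_eq_zero, map_eq_zero_iff φ hφinj] at hx
    simp only at h0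
    simp [h0, hx.resolve_left hj]
  have hrank : Module.finrank ℝ (ℂ × ℂ) = Module.finrank ℝ ℍ[ℝ] := by
    rw [Module.finrank_prod, Complex.finrank_real_complex, Quaternion.finrank_eq_four]
  obtain ⟨⟨c₁, c₂⟩, hc⟩ := (LinearMap.injective_iff_surjective_of_finrank_eq_finrank hrank).1 hinj h
  exact ⟨c₁, c₂, hc.symm⟩

section QuaternionicModule

open MulOpposite

variable {W : Type*} [AddCommGroup W] [Module ℍ[ℝ]ᵐᵒᵖ W] [Module ℂ W] {φ : ℂ →ₐ[ℝ] ℍ[ℝ]}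
  {j : ℍ[ℝ]}

noncomputable def complexRep (hsmul : ∀ (c : ℂ) (w : W), c • w = op (φ c) • w) {A : Type*}
    [Monoid A] (ρ : A →* (W ≃ₗ[ℍ[ℝ]ᵐᵒᵖ] W)) : Representation ℂ A W where
  toFun a :=
    { toFun := ρ a
      map_add' := map_add (ρ a)
      map_smul' c w := by simp only [hsmul, map_smul, RingHom.id_apply] }
  map_one' := by ext; simp
  map_mul' a b := by ext; simp

noncomputable def rightMulConj (hsmul : ∀ (c : ℂ) (w : W), c • w = op (φ c) • w)
    (hj : ∀ c, φ c * j = j * φ (conj c)) : W →ₗ⋆[ℂ] W where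
  toFun w := op j • w
  map_add' := smul_add (op j)
  map_smul' c w := by simp only [hsmul, smul_smul, ← op_mul, hj]

variable (hsmul : ∀ (c : ℂ) (w : W), c • w = op (φ c) • w) (hj : ∀ c, φ c * j = j * φ (conj c))

theorem rightMulConj_apply (w : W) : rightMulConj hsmul hj w = op j • w := rfl

theorem rightMulConj_map (f : W ≃ₗ[ℍ[ℝ]ᵐᵒᵖ] W) (w : W) :
    rightMulConj hsmul hj (f w) = f (rightMulConj hsmul hj w) :=
  (f.map_smul (op j) w).symm

theorem rightMulConj_rightMulConj (hjj : j * j = -1) (w : W) :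
    rightMulConj hsmul hj (rightMulConj hsmul hj w) = -w := by
  rw [rightMulConj_apply, rightMulConj_apply, smul_smul, ← op_mul, hjj, op_neg, op_one, neg_smul,
    one_smul]

theorem exists_smul_eq_add_smul_rightMulConj (hj0 : j ≠ 0) (m : ℍ[ℝ]ᵐᵒᵖ) :
    ∃ c₁ c₂ : ℂ, ∀ w : W, m • w = c₁ • w + c₂ • rightMulConj hsmul hj w := by
  obtain ⟨c₁, c₂, hm⟩ := Quaternion.exists_eq_add_mul φ hj0 hj m.unop
  refine ⟨c₁, c₂, fun w => ?_⟩
  rw [← op_unop m, hm, op_add, op_mul, add_smul, mul_smul, hsmul, hsmul, rightMulConj_apply]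

noncomputable def LinearEquiv.ofCommuteRightMulConj (hj0 : j ≠ 0) (T : W ≃ₗ[ℂ] W)
    (hT : ∀ w, T (rightMulConj hsmul hj w) = rightMulConj hsmul hj (T w)) :
    W ≃ₗ[ℍ[ℝ]ᵐᵒᵖ] W :=
  { T.toAddEquiv with
    map_smul' m w := by
      obtain ⟨c₁, c₂, hm⟩ := exists_smul_eq_add_smul_rightMulConj hsmul hj hj0 m
      show T (m • w) = m • T w
      rw [hm, hm, map_add, map_smul, map_smul, hT] }

end QuaternionicModule

theorem stmt_11_general (A : Type*) [Group A] [Finite A]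
    (W : Type*) [AddCommGroup W] [Module (Quaternion ℝ)ᵐᵒᵖ W]
    (ρ₁ ρ₂ : A →* (W ≃ₗ[(Quaternion ℝ)ᵐᵒᵖ] W))
    (φ : ℂ →ₐ[ℝ] Quaternion ℝ)
    [Module ℂ W]
    (hsmul : ∀ (c : ℂ) (w : W), c • w = MulOpposite.op (φ c) • w)
    (h2 : Nontrivial W ∧ ∀ U : Submodule ℂ W,
      (∀ (a : A) (w : W), w ∈ U → ρ₂ a w ∈ U) → U = ⊥ ∨ U = ⊤)
    (hiso : ∃ e : W ≃ₗ[ℂ] W, ∀ (a : A) (w : W), e (ρ₁ a w) = ρ₂ a (e w)) :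
    ∃ T : W ≃ₗ[(Quaternion ℝ)ᵐᵒᵖ] W,
      ∀ (a : A) (w : W), T (ρ₁ a w) = ρ₂ a (T w) := by
  obtain ⟨j, hjj, hjI⟩ := Quaternion.exists_mul_self_eq_neg_one_anticommute (φ Complex.I)
    (by rw [← map_mul, Complex.I_mul_I, map_neg, map_one])
  have hj := φ.apply_mul_eq_mul_apply_conj hjI
  have hj0 : j ≠ 0 := by rintro rfl; simp at hjj
  have hJJ := rightMulConj_rightMulConj hsmul hj hjj
  have : Nontrivial W := h2.1
  have : (complexRep hsmul ρ₂).IsIrreducible :=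
    (complexRep hsmul ρ₂).isIrreducible_of_forall_submodule h2.2
  have : FiniteDimensional ℂ W := (complexRep hsmul ρ₂).finiteDimensional_of_isIrreducible
  obtain ⟨e, he⟩ := hiso
  let E : (complexRep hsmul ρ₁).Equiv (complexRep hsmul ρ₂) := .mk e fun a => LinearMap.ext (he a)
  let J := rightMulConj hsmul hj
  obtain ⟨c, hc⟩ := Representation.IsIrreducible.exists_eq_smul E <|
    (J ∘ₛₗ e.toLinearMap ∘ₛₗ J).intertwiningMap_of_isIntertwiningMap _ _ fun a w => by
      show J (e (J (ρ₁ a w))) = ρ₂ a (J (e (J w)))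
      rw [rightMulConj_map, he, rightMulConj_map]
  obtain ⟨μ, hμ, hμJ⟩ := exists_smul_commute_conjLinear hJJ hJJ e.injective hc
  refine ⟨LinearEquiv.ofCommuteRightMulConj hsmul hj hj0 (e.trans (.smulOfNeZero ℂ W μ hμ)) hμJ,
    fun a w => ?_⟩
  show μ • e (ρ₁ a w) = ρ₂ a (μ • e w)
  rw [he, hsmul, hsmul, map_smul]

/-- Let `A` be a finite group, `W` a finite-dimensional right module over the
quaternions `ℍ = Quaternion ℝ` (encoded as a module over `ℍᵐᵒᵖ`), and
`ρ₁, ρ₂ : A → GL_ℍ(W)` homomorphisms into the group of `ℍ`-linear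
automorphisms of `W`.  Fix an `ℝ`-algebra embedding `φ : ℂ ↪ ℍ` and view `W`
as a complex vector space by restriction of scalars along `φ`.  If the
resulting complex representations underlying `ρ₁` and `ρ₂` are irreducible and
isomorphic as complex representations, then `ρ₁` and `ρ₂` are isomorphic as
`ℍ`-linear representations. -/
theorem stmt_11 (A : Type*) [Group A] [Finite A]
    (W : Type*) [AddCommGroup W] [Module (Quaternion ℝ)ᵐᵒᵖ W]
    [Module.Finite (Quaternion ℝ)ᵐᵒᵖ W]
    (ρ₁ ρ₂ : A →* (W ≃ₗ[(Quaternion ℝ)ᵐᵒᵖ] W))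
    (φ : ℂ →ₐ[ℝ] Quaternion ℝ) (hφ : Function.Injective φ)
    [Module ℂ W]
    (hsmul : ∀ (c : ℂ) (w : W), c • w = MulOpposite.op (φ c) • w)
    (h1 : Nontrivial W ∧ ∀ U : Submodule ℂ W,
      (∀ (a : A) (w : W), w ∈ U → ρ₁ a w ∈ U) → U = ⊥ ∨ U = ⊤)
    (h2 : Nontrivial W ∧ ∀ U : Submodule ℂ W,
      (∀ (a : A) (w : W), w ∈ U → ρ₂ a w ∈ U) → U = ⊥ ∨ U = ⊤)
    (hiso : ∃ e : W ≃ₗ[ℂ] W, ∀ (a : A) (w : W), e (ρ₁ a w) = ρ₂ a (e w)) :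
    ∃ T : W ≃ₗ[(Quaternion ℝ)ᵐᵒᵖ] W,
      ∀ (a : A) (w : W), T (ρ₁ a w) = ρ₂ a (T w) :=
  stmt_11_general A W ρ₁ ρ₂ φ hsmul h2 hiso
end

section
/- Let P and H be finite groups, let U ⊴ P be a normal subgroup, let P act on H by automorphisms, and let (π, V) be a finite-dimensional complex representation of the semidirect product P ⋉ H such that the restriction π|_H is irreducible. Suppose that every element of U acts trivially on H and that U ⊆ [P, U] (every element of U is a product of commutators [p, u] with p ∈ P, u ∈ U). Then π|_U is trivial, i.e., π(u, 1) = id_V for all u ∈ U. -/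
/-!
By Schur's lemma, an operator commuting with the irreducible family `π|_H` is a scalar; since `U`
acts trivially on `H`, every `π(u)` with `u ∈ U` commutes with `π|_H` and is therefore central in
`End V`. Hence `π` kills every commutator `[p, u]`, so the kernel of `π|_P` contains `[P, U] ⊇ U`.
-/

open scoped commutatorElement

theorem Module.End.exists_eq_smul_one_of_forall_commute {K V ι : Type*} [Field K] [IsAlgClosed K]
    [AddCommGroup V] [Module K V] [FiniteDimensional K V] [Nontrivial V]
    (T : ι → Module.End K V)
    (hirr : ∀ W : Submodule K V, (∀ i, ∀ v ∈ W, T i v ∈ W) → W = ⊥ ∨ W = ⊤)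
    {f : Module.End K V} (hf : ∀ i, Commute f (T i)) :
    ∃ c : K, f = c • 1 := by
  obtain ⟨c, hc⟩ := f.exists_eigenvalue
  have hinv : ∀ i, ∀ v ∈ f.eigenspace c, T i v ∈ f.eigenspace c := by
    intro i v hv
    rw [Module.End.mem_eigenspace_iff] at hv ⊢
    rw [← Module.End.mul_apply, (hf i).eq, Module.End.mul_apply, hv, map_smul]
  rcases hirr _ hinv with hbot | htop
  · exact absurd hbot hc
  · refine ⟨c, LinearMap.ext fun v => ?_⟩
    simpa using (Module.End.mem_eigenspace_iff).1 (htop ▸ Submodule.mem_top : v ∈ f.eigenspace c)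

theorem MonoidHom.map_commutatorElement_eq_one_of_commute {G M : Type*} [Group G] [Monoid M]
    (ρ : G →* M) {g h : G} (hgh : Commute (ρ g) (ρ h)) : ρ ⁅g, h⁆ = 1 := by
  have : ρ.toHomUnits ⁅g, h⁆ = 1 := by
    rw [map_commutatorElement, commutatorElement_eq_one_iff_commute]
    exact Commute.units_of_val hgh
  exact congrArg Units.val this

theorem SemidirectProduct.commute_inr_inl {N G : Type*} [Group N] [Group G] {φ : G →* MulAut N}
    {g : G} {n : N} (hgn : φ g n = n) :
    Commute (inr g : N ⋊[φ] G) (inl n) := by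
  rw [Commute, SemiconjBy, ← mul_inv_eq_iff_eq_mul, ← map_inv, ← inl_aut, hgn]

theorem stmt_14_general (P H : Type*) [Group P] [Group H]
    (φ : P →* MulAut H) (U : Subgroup P)
    (V : Type*) [AddCommGroup V] [Module ℂ V] [FiniteDimensional ℂ V]
    (π : Representation ℂ (H ⋊[φ] P) V)
    (hrestr_irr : Nontrivial V ∧
      ∀ W : Submodule ℂ V,
        (∀ (h : H) (v : V), v ∈ W → π (SemidirectProduct.inl h) v ∈ W) →
          W = ⊥ ∨ W = ⊤)
    (htriv : ∀ u ∈ U, ∀ h : H, φ u h = h)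
    (hcomm : U ≤ ⁅(⊤ : Subgroup P), U⁆) :
    ∀ u ∈ U, π (SemidirectProduct.inr u) = LinearMap.id := by
  obtain ⟨_, hirr⟩ := hrestr_irr
  have hscalar : ∀ u ∈ U, ∃ c : ℂ, π (SemidirectProduct.inr u) = c • 1 := fun u hu =>
    Module.End.exists_eq_smul_one_of_forall_commute (fun h => π (SemidirectProduct.inl h))
      (fun W hW => hirr W fun h v hv => hW h v hv)
      fun h => (SemidirectProduct.commute_inr_inl (htriv u hu h)).map π
  have hker : ⁅(⊤ : Subgroup P), U⁆ ≤ (π.comp SemidirectProduct.inr).ker := by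
    rw [Subgroup.commutator_le]
    intro p _ u hu
    obtain ⟨c, hc⟩ := hscalar u hu
    refine MonoidHom.mem_ker.2 (MonoidHom.map_commutatorElement_eq_one_of_commute _ ?_)
    simp only [MonoidHom.coe_comp, Function.comp_apply, hc]
    exact (Commute.one_right _).smul_right c
  exact fun u hu => MonoidHom.mem_ker.1 (hker (hcomm hu))

/-- Let `P` and `H` be finite groups, `U ⊴ P` a normal subgroup, `P` acting on
`H` by automorphisms, and `(π, V)` a finite-dimensional complex representation
of `P ⋉ H` (encoded as `H ⋊[φ] P`) whose restriction to `H` is irreducible.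
If every element of `U` acts trivially on `H` and `U ⊆ [P, U]`, then `π` is
trivial on `U`. -/
theorem stmt_14 (P H : Type*) [Group P] [Group H] [Finite P] [Finite H]
    (φ : P →* MulAut H) (U : Subgroup P) (hU : U.Normal)
    (V : Type*) [AddCommGroup V] [Module ℂ V] [FiniteDimensional ℂ V]
    (π : Representation ℂ (H ⋊[φ] P) V)
    (hrestr_irr : Nontrivial V ∧
      ∀ W : Submodule ℂ V,
        (∀ (h : H) (v : V), v ∈ W → π (SemidirectProduct.inl h) v ∈ W) →
          W = ⊥ ∨ W = ⊤)
    (htriv : ∀ u ∈ U, ∀ h : H, φ u h = h)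
    (hcomm : U ≤ ⁅(⊤ : Subgroup P), U⁆) :
    ∀ u ∈ U, π (SemidirectProduct.inr u) = LinearMap.id :=
  stmt_14_general P H φ U V π hrestr_irr htriv hcomm
end

section
/- Let p be an odd prime and let P be a Heisenberg 𝔽_p-group with |P| > p. Fix an identification of Z(P) with 𝔽_p, write V := P/Z(P) with the nondegenerate alternating form ω_P(xZ(P), yZ(P)) = [x,y], and let V♯ := V♯_{ω_P/2} (the group 𝔽_p × V with multiplication (a,v)(b,w) = (a + b + ½ω_P(v,w), v + w)). Let Sp(V) be the group of linear automorphisms of V preserving ω_P, acting on V♯ by g·(a,v) = (a, g v). Let A be a subgroup of Aut^{Z}(P), the automorphisms of P acting trivially on Z(P), and let pr : A → Sp(V) be the map sending an automorphism to the induced map on V. Suppose f₁, f₂ : A ⋉ P → Sp(V) ⋉ V♯ are group homomorphisms such that, for i = 1, 2: f_i(a, 1) = (pr(a), 1) for all a ∈ A, and the restriction of f_i to {1} ⋉ P is an isomorphism onto {1} ⋉ V♯ which is special, i.e., the induced map on quotients V = P/Z(P) → V♯/(𝔽_p × {0}) = V is the identity. Then there exists h ∈ P such that f₂(g) = f₁((1,h)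 · g · (1,h)⁻¹) for all g ∈ A ⋉ P. -/
open scoped commutatorElement

section Sharp

variable {k : Type*} [Field k] {V : Type*} [AddCommGroup V] [Module k V]

/-- The group `V♯_B`: the set `k × V` with multiplication
`(a,v)·(b,w) = (a + b + B(v,w), v + w)`. -/
@[ext]
structure Sharp (B : V →ₗ[k] V →ₗ[k] k) : Type _ where
  a : k
  v : V

namespace Sharp

variable {B : V →ₗ[k] V →ₗ[k] k}

instance : Mul (Sharp B) := ⟨fun x y => ⟨x.a + y.a + B x.v y.v, x.v + y.v⟩⟩
instance : One (Sharp B) := ⟨⟨0, 0⟩⟩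
instance : Inv (Sharp B) := ⟨fun x => ⟨-x.a + B x.v x.v, -x.v⟩⟩

@[simp] theorem mul_a (x y : Sharp B) : (x * y).a = x.a + y.a + B x.v y.v := rfl
@[simp] theorem mul_v (x y : Sharp B) : (x * y).v = x.v + y.v := rfl
@[simp] theorem one_a : (1 : Sharp B).a = 0 := rfl
@[simp] theorem one_v : (1 : Sharp B).v = 0 := rfl
@[simp] theorem inv_a (x : Sharp B) : x⁻¹.a = -x.a + B x.v x.v := rfl
@[simp] theorem inv_v (x : Sharp B) : x⁻¹.v = -x.v := rfl

instance : Group (Sharp B) where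
  mul_assoc x y z := by
    ext
    · simp only [mul_a, mul_v, map_add, LinearMap.add_apply]
      ring
    · simp only [mul_v, add_assoc]
  one_mul x := by
    ext
    · simp
    · simp
  mul_one x := by
    ext
    · simp
    · simp
  inv_mul_cancel x := by
    ext
    · simp only [mul_a, inv_a, inv_v, one_a, map_neg, LinearMap.neg_apply]
      ring
    · simp

end Sharp

/-- The symplectic group of the form `ω`: linear automorphisms of `V`
preserving `ω`. -/
def SpGrp (ω : V →ₗ[k] V →ₗ[k] k) : Subgroup (V ≃ₗ[k] V) where
  carrier := {g | ∀ v w : V, ω (g v) (g w) = ω v w}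
  one_mem' := by
    intro v w
    simp
  mul_mem' := by
    intro g h hg hh v w
    calc ω ((g * h) v) ((g * h) w) = ω (g (h v)) (g (h w)) := rfl
      _ = ω (h v) (h w) := hg _ _
      _ = ω v w := hh _ _
  inv_mem' := by
    intro g hg v w
    have h1 := hg (g.symm v) (g.symm w)
    rw [LinearEquiv.apply_symm_apply, LinearEquiv.apply_symm_apply] at h1
    show ω (g.symm v) (g.symm w) = ω v w
    exact h1.symm

variable (c : k) (ω : V →ₗ[k] V →ₗ[k] k)

/-- The action of an element of `Sp(V, ω)` on `V♯_{c·ω}`, `g·(a,v) = (a, gv)`. -/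
def spAut (g : ↥(SpGrp ω)) : Sharp (c • ω) ≃* Sharp (c • ω) where
  toFun x := ⟨x.a, (g : V ≃ₗ[k] V) x.v⟩
  invFun x := ⟨x.a, (g : V ≃ₗ[k] V).symm x.v⟩
  left_inv x := by
    ext
    · rfl
    · simp
  right_inv x := by
    ext
    · rfl
    · simp
  map_mul' x y := by
    ext
    · show (x * y).a = x.a + y.a + (c • ω) ((g : V ≃ₗ[k] V) x.v) ((g : V ≃ₗ[k] V) y.v)
      simp only [Sharp.mul_a, LinearMap.smul_apply, smul_eq_mul, g.2 x.v y.v]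
    · simp

/-- The action of `Sp(V, ω)` on `V♯_{c·ω}` as a homomorphism into the
automorphism group. -/
def spHom : ↥(SpGrp ω) →* MulAut (Sharp (c • ω)) where
  toFun := spAut c ω
  map_one' := by
    apply MulEquiv.ext
    intro x
    apply Sharp.ext
    · rfl
    · show ((1 : ↥(SpGrp ω)) : V ≃ₗ[k] V) x.v = ((1 : MulAut (Sharp (c • ω))) x).v
      simp
  map_mul' g h := by
    apply MulEquiv.ext
    intro x
    apply Sharp.ext
    · rfl
    · rfl

end Sharp

/-- The image in `V` of an element of `P`, under the fixed identification `θ`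
of `P/Z(P)` with `V`. -/
def toV {P : Type*} [Group P] {V : Type*} [AddCommGroup V]
    (θ : (P ⧸ Subgroup.center P) ≃* Multiplicative V) (x : P) : V :=
  Multiplicative.toAdd (θ (x : P ⧸ Subgroup.center P))

/-!
On `P`, each `fᵢ` has the form `x ↦ (aᵢ x, x̄)`, and `a₂ - a₁` is a homomorphism `P → 𝔽_p`.
It kills the commutators, hence the centre (which is generated by one nontrivial commutator),
so it is a linear form on `V`, i.e. `ω(u, ·)` for some `u ∈ V` by nondegeneracy. Because `V♯`
is built from `ω / 2`, conjugating by `(a, u)` in `V♯` adds exactly `ω(u, ·)` to the centre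
coordinate, so `f₂` and `f₁ ∘ conj_h` agree on `P` for any `h` over `u`. Both `aᵢ` are
`A`-invariant, so `ω(u, ·)` is, and `u` is fixed by `pr(A)`; then `(a, u)` commutes with
`pr(A)` in `Sp(V) ⋉ V♯` and the two maps agree on `A` as well.
-/

namespace SemidirectProduct

variable {N G N' G' : Type*} [Group N] [Group G] [Group N'] [Group G']
  {φ : G →* MulAut N} {φ' : G' →* MulAut N'} {f : N ⋊[φ] G →* N' ⋊[φ'] G'}

theorem exists_monoidHom_of_map_inl (hf : ∀ n, ∃ n', f (inl n) = inl n') :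
    ∃ σ : N →* N', ∀ n, f (inl n) = inl (σ n) := by
  choose s hs using hf
  refine ⟨MonoidHom.mk' s fun n m => inl_injective (φ := φ') ?_, hs⟩
  rw [← hs]
  simp only [map_mul, hs]

theorem map_aut_of_map_inl_of_map_inr {σ : N → N'} {r : G → G'}
    (hσ : ∀ n, f (inl n) = inl (σ n)) (hr : ∀ g, f (inr g) = inr (r g)) (g : G) (n : N) :
    σ (φ g n) = φ' (r g) (σ n) := by
  apply inl_injective (φ := φ')
  rw [← hσ, inl_aut, inl_aut]
  simp only [map_mul, map_inv, hσ, hr]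

theorem commute_inl_inr {n : N} {g : G} (h : φ g n = n) : Commute (inl n : N ⋊[φ] G) (inr g) := by
  have hconj := inl_aut (φ := φ) g n
  rw [h] at hconj
  show inl n * inr g = inr g * inl n
  conv_lhs => rw [hconj]
  rw [map_inv, inv_mul_cancel_right]

theorem eq_conj_of_map_inl_of_map_inr {H : Type*} [Group H] {f₁ f₂ : N ⋊[φ] G →* H} (n : N)
    (hl : ∀ m, f₂ (inl m) = f₁ (inl n * inl m * (inl n)⁻¹))
    (hr : ∀ g, f₂ (inr g) = f₁ (inl n * inr g * (inl n)⁻¹)) (x : N ⋊[φ] G) :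
    f₂ x = f₁ (inl n * x * (inl n)⁻¹) :=
  DFunLike.congr_fun (hom_ext (g := f₁.comp (MulAut.conj (inl n)).toMonoidHom)
    (MonoidHom.ext hl) (MonoidHom.ext hr)) x

end SemidirectProduct

namespace Sharp

variable {k V : Type*} [Field k] [AddCommGroup V] [Module k V]

theorem mul_mul_inv_a {B : V →ₗ[k] V →ₗ[k] k} (x y : Sharp B) :
    (x * y * x⁻¹).a = y.a + B x.v y.v - B y.v x.v := by
  simp only [mul_a, mul_v, inv_a, inv_v, map_add, map_neg, LinearMap.add_apply]
  ring

theorem mul_mul_inv_v {B : V →ₗ[k] V →ₗ[k] k} (x y : Sharp B) : (x * y * x⁻¹).v = y.v := by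
  simp

theorem mul_mul_inv_eq {ω : V →ₗ[k] V →ₗ[k] k} (hω : ω.IsAlt) (h2 : (2 : k) ≠ 0)
    (x y : Sharp ((2 : k)⁻¹ • ω)) : x * y * x⁻¹ = ⟨y.a + ω x.v y.v, y.v⟩ := by
  ext
  · simp only [mul_mul_inv_a, LinearMap.smul_apply, smul_eq_mul]
    rw [← hω.neg x.v y.v]
    field_simp
    ring
  · exact mul_mul_inv_v x y

def diffHom {G : Type*} [Group G] {B : V →ₗ[k] V →ₗ[k] k} (σ₁ σ₂ : G →* Sharp B)
    (h : ∀ x, (σ₁ x).v = (σ₂ x).v) : G →* Multiplicative k :=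
  MonoidHom.mk' (fun x => Multiplicative.ofAdd ((σ₂ x).a - (σ₁ x).a)) fun x y => by
    simp only [map_mul, mul_a, ← h, ← ofAdd_add]
    congr 1
    ring

theorem exists_monoidHom_of_map_inl {H A' K : Type*} [Group H] [Group A'] [Group K] {B : V →ₗ[k] V →ₗ[k] k} {ψ : A' →* MulAut H}
    {χ : K →* MulAut (Sharp B)} {f : H ⋊[ψ] A' →* Sharp B ⋊[χ] K} {w : H → V}
    (hf : ∀ x, ∃ a, f (SemidirectProduct.inl x) = SemidirectProduct.inl ⟨a, w x⟩) :
    ∃ σ : H →* Sharp B, (∀ x, f (SemidirectProduct.inl x) = SemidirectProduct.inl (σ x)) ∧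
      ∀ x, (σ x).v = w x := by
  obtain ⟨σ, hσ⟩ := SemidirectProduct.exists_monoidHom_of_map_inl fun x =>
    (hf x).elim fun _ ha => ⟨_, ha⟩
  refine ⟨σ, hσ, fun x => ?_⟩
  obtain ⟨a, ha⟩ := hf x
  rw [SemidirectProduct.inl_injective ((hσ x).symm.trans ha)]

theorem spHom_apply_eq_self {c : k} {ω : V →ₗ[k] V →ₗ[k] k} {g : SpGrp ω} {x : Sharp (c • ω)}
    (h : (g : V ≃ₗ[k] V) x.v = x.v) : spHom c ω g x = x :=
  Sharp.ext rfl h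

theorem a_map_aut_of_map_inl_of_map_inr {N G : Type*} [Group N] [Group G] {c : k} {ω : V →ₗ[k] V →ₗ[k] k} {φ : G →* MulAut N}
    {f : N ⋊[φ] G →* Sharp (c • ω) ⋊[spHom c ω] SpGrp ω} {σ : N → Sharp (c • ω)}
    {r : G → SpGrp ω} (hσ : ∀ n, f (SemidirectProduct.inl n) = SemidirectProduct.inl (σ n))
    (hr : ∀ g, f (SemidirectProduct.inr g) = SemidirectProduct.inr (r g)) (g : G) (n : N) :
    (σ (φ g n)).a = (σ n).a := by
  rw [SemidirectProduct.map_aut_of_map_inl_of_map_inr hσ hr g n]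
  rfl

end Sharp

theorem SpGrp.apply_eq_self {k V : Type*} [Field k] [AddCommGroup V] [Module k V]
    {ω : V →ₗ[k] V →ₗ[k] k} (hω : ω.SeparatingLeft) (g : SpGrp ω) {u : V}
    (hu : ∀ v, ω u ((g : V ≃ₗ[k] V) v) = ω u v) : (g : V ≃ₗ[k] V) u = u := by
  refine sub_eq_zero.mp (hω _ fun w => ?_)
  obtain ⟨v, rfl⟩ := (g : V ≃ₗ[k] V).surjective w
  rw [map_sub, LinearMap.sub_apply, g.2, hu, sub_self]

theorem LinearMap.SeparatingLeft.exists_eq {K V : Type*} [Field K] [AddCommGroup V]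
    [Module K V] [FiniteDimensional K V] {ω : V →ₗ[K] V →ₗ[K] K} (hω : ω.SeparatingLeft)
    (l : Module.Dual K V) : ∃ u, ω u = l :=
  (LinearMap.injective_iff_surjective_of_finrank_eq_finrank Subspace.dual_finrank_eq.symm).mp
    (LinearMap.ker_eq_bot.mp (LinearMap.separatingLeft_iff_ker_eq_bot.mp hω)) l

theorem IsHeisenberg.center_le_ker {p : ℕ} [Fact p.Prime] {P : Type*} [Group P]
    (hP : IsHeisenberg p P) (hbig : p < Nat.card P) {G : Type*} [CommGroup G] (Φ : P →* G) :
    Subgroup.center P ≤ Φ.ker := by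
  obtain ⟨x, y, hxy⟩ : ∃ x y : P, ⁅x, y⁆ ≠ 1 := by
    by_contra! hcomm
    have hcenter : Subgroup.center P = ⊤ := eq_top_iff.mpr fun x _ => Subgroup.mem_center_iff.mpr
      fun y => (commutatorElement_eq_one_iff_mul_comm.mp (hcomm x y)).symm
    have := hP.card_center
    rw [hcenter, Subgroup.card_top] at this
    omega
  let c : Subgroup.center P := ⟨⁅x, y⁆, hP.commutator_mem x y⟩
  have hc : Subgroup.zpowers c = ⊤ :=
    zpowers_eq_top_of_prime_card hP.card_center fun h => hxy (congrArg Subtype.val h)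
  have hΦc : Φ ⁅x, y⁆ = 1 := by
    rw [map_commutatorElement, commutatorElement_eq_one_iff_mul_comm, mul_comm]
  intro z hz
  obtain ⟨n, hn⟩ :=
    Subgroup.mem_zpowers_iff.mp (hc ▸ Subgroup.mem_top (⟨z, hz⟩ : Subgroup.center P))
  have hzn : ((c ^ n : Subgroup.center P) : P) = z := congrArg Subtype.val hn
  rw [MonoidHom.mem_ker, ← hzn, Subgroup.coe_zpow, map_zpow]
  exact (congrArg (· ^ n) hΦc).trans (one_zpow n)

section CommutatorForm

variable {P : Type*} [Group P] {V : Type*} [AddCommGroup V]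
  (θ : (P ⧸ Subgroup.center P) ≃* Multiplicative V)

theorem toV_surjective : Function.Surjective (toV θ) := fun v => by
  obtain ⟨x, hx⟩ := QuotientGroup.mk_surjective (θ.symm (Multiplicative.ofAdd v))
  exact ⟨x, by rw [toV, hx, MulEquiv.apply_symm_apply, toAdd_ofAdd]⟩

theorem toV_eq_zero_of_mem_center {z : P} (hz : z ∈ Subgroup.center P) : toV θ z = 0 := by
  rw [toV, (QuotientGroup.eq_one_iff z).mpr hz, map_one, toAdd_one]

theorem exists_linearMap_of_center_le_ker {p : ℕ} [Module (ZMod p) V]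
    (Φ : P →* Multiplicative (ZMod p)) (hΦ : Subgroup.center P ≤ Φ.ker) :
    ∃ l : V →ₗ[ZMod p] ZMod p, ∀ x, Multiplicative.toAdd (Φ x) = l (toV θ x) := by
  let ψ := (QuotientGroup.lift _ Φ hΦ).comp θ.symm.toMonoidHom
  refine ⟨(AddMonoidHom.mk' (fun v => Multiplicative.toAdd (ψ (Multiplicative.ofAdd v)))
    fun v w => by simp [ofAdd_add]).toZModLinearMap p, fun x => ?_⟩
  simp [ψ, toV]

variable {p : ℕ} [Module (ZMod p) V] (ι : Subgroup.center P ≃* Multiplicative (ZMod p))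
  {ω : V →ₗ[ZMod p] V →ₗ[ZMod p] ZMod p} {hcomm : ∀ x y : P, ⁅x, y⁆ ∈ Subgroup.center P}

theorem isAlt_of_commutator
    (hω : ∀ x y : P, ι ⟨⁅x, y⁆, hcomm x y⟩ = Multiplicative.ofAdd (ω (toV θ x) (toV θ y))) :
    ω.IsAlt := by
  intro v
  obtain ⟨x, rfl⟩ := toV_surjective θ v
  have h := hω x x
  rw [show (⟨⁅x, x⁆, hcomm x x⟩ : Subgroup.center P) = 1 from
    Subtype.ext (commutatorElement_self x), map_one] at h
  exact ofAdd_eq_one.mp h.symm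

theorem separatingLeft_of_commutator
    (hω : ∀ x y : P, ι ⟨⁅x, y⁆, hcomm x y⟩ = Multiplicative.ofAdd (ω (toV θ x) (toV θ y))) :
    ω.SeparatingLeft := by
  intro v hv
  obtain ⟨x, rfl⟩ := toV_surjective θ v
  refine toV_eq_zero_of_mem_center θ (Subgroup.mem_center_iff.mpr fun y => ?_)
  have h := hω x y
  rw [hv, ofAdd_zero, ← map_one ι] at h
  exact (commutatorElement_eq_one_iff_mul_comm.mp (congrArg Subtype.val (ι.injective h))).symm

end CommutatorForm

theorem IsHeisenberg.exists_a_eq_add {p : ℕ} [Fact p.Prime] {P : Type*} [Group P] [Finite P]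
    (hP : IsHeisenberg p P) (hbig : p < Nat.card P) {V : Type*} [AddCommGroup V]
    [Module (ZMod p) V] (θ : (P ⧸ Subgroup.center P) ≃* Multiplicative V)
    {ω B : V →ₗ[ZMod p] V →ₗ[ZMod p] ZMod p} (hω : ω.SeparatingLeft) (σ₁ σ₂ : P →* Sharp B)
    (hσ₁ : ∀ x, (σ₁ x).v = toV θ x) (hσ₂ : ∀ x, (σ₂ x).v = toV θ x) :
    ∃ u, ∀ x, (σ₂ x).a = (σ₁ x).a + ω u (toV θ x) := by
  have : Finite V := Finite.of_equiv _ (θ.toEquiv.trans Multiplicative.toAdd)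
  have : Module.Finite (ZMod p) V := Module.Finite.of_finite
  let Φ := Sharp.diffHom σ₁ σ₂ fun x => (hσ₁ x).trans (hσ₂ x).symm
  obtain ⟨l, hl⟩ := exists_linearMap_of_center_le_ker θ Φ (hP.center_le_ker hbig Φ)
  obtain ⟨u, rfl⟩ := hω.exists_eq l
  exact ⟨u, fun x => eq_add_of_sub_eq' (hl x)⟩

theorem stmt_16_general (p : ℕ) [Fact p.Prime] (hp2 : p ≠ 2)
    (P : Type*) [Group P] [Finite P] (hP : IsHeisenberg p P)
    (hbig : p < Nat.card P)
    (V : Type*) [AddCommGroup V] [Module (ZMod p) V]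
    (ι : ↥(Subgroup.center P) ≃* Multiplicative (ZMod p))
    (θ : (P ⧸ Subgroup.center P) ≃* Multiplicative V)
    (ω : V →ₗ[ZMod p] V →ₗ[ZMod p] ZMod p)
    (hω : ∀ x y : P, ι ⟨⁅x, y⁆, hP.commutator_mem x y⟩ =
      Multiplicative.ofAdd (ω (toV θ x) (toV θ y)))
    (A : Subgroup (MulAut P))
    (f₁ f₂ : (P ⋊[A.subtype] ↥A) →*
      (Sharp ((2 : ZMod p)⁻¹ • ω) ⋊[spHom ((2 : ZMod p)⁻¹) ω] ↥(SpGrp ω)))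
    -- each `f i` restricted to `A` is the natural projection `A → Sp(V)`
    (hf₁A : ∀ α : ↥A, ∃ g : ↥(SpGrp ω),
      f₁ (SemidirectProduct.inr α) = SemidirectProduct.inr g ∧
      ∀ x : P, toV θ ((α : MulAut P) x) = (g : V ≃ₗ[ZMod p] V) (toV θ x))
    (hf₂A : ∀ α : ↥A, ∃ g : ↥(SpGrp ω),
      f₂ (SemidirectProduct.inr α) = SemidirectProduct.inr g ∧
      ∀ x : P, toV θ ((α : MulAut P) x) = (g : V ≃ₗ[ZMod p] V) (toV θ x))
    -- each `f i` restricted to `{1} ⋉ P` is a special isomorphism onto `{1} ⋉ V♯`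
    (hf₁P : (∀ x : P, ∃ a : ZMod p,
        f₁ (SemidirectProduct.inl x) = SemidirectProduct.inl ⟨a, toV θ x⟩) ∧
      Function.Injective (fun x : P => f₁ (SemidirectProduct.inl x)) ∧
      ∀ y : Sharp ((2 : ZMod p)⁻¹ • ω), ∃ x : P,
        f₁ (SemidirectProduct.inl x) = SemidirectProduct.inl y)
    (hf₂P : (∀ x : P, ∃ a : ZMod p,
        f₂ (SemidirectProduct.inl x) = SemidirectProduct.inl ⟨a, toV θ x⟩) ∧
      Function.Injective (fun x : P => f₂ (SemidirectProduct.inl x)) ∧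
      ∀ y : Sharp ((2 : ZMod p)⁻¹ • ω), ∃ x : P,
        f₂ (SemidirectProduct.inl x) = SemidirectProduct.inl y) :
    ∃ h : P, ∀ g : P ⋊[A.subtype] ↥A,
      f₂ g = f₁ (SemidirectProduct.inl h * g * (SemidirectProduct.inl h)⁻¹) := by
  have h2 : (2 : ZMod p) ≠ 0 := Ring.two_ne_zero (by rwa [ZMod.ringChar_zmod_n])
  have hωalt := isAlt_of_commutator θ ι hω
  have hωsep := separatingLeft_of_commutator θ ι hω
  obtain ⟨σ₁, hσ₁, hσ₁v⟩ := Sharp.exists_monoidHom_of_map_inl hf₁P.1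
  obtain ⟨σ₂, hσ₂, hσ₂v⟩ := Sharp.exists_monoidHom_of_map_inl hf₂P.1
  choose g₁ hg₁ hg₁V using hf₁A
  choose g₂ hg₂ hg₂V using hf₂A
  have hg : ∀ α, g₂ α = g₁ α := fun α => Subtype.ext <| LinearEquiv.ext fun v => by
    obtain ⟨x, rfl⟩ := toV_surjective θ v
    rw [← hg₁V, ← hg₂V]
  obtain ⟨u, hu⟩ := hP.exists_a_eq_add hbig θ hωsep σ₁ σ₂ hσ₁v hσ₂v
  have hfix : ∀ α, (g₁ α : V ≃ₗ[ZMod p] V) u = u := fun α =>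
    SpGrp.apply_eq_self hωsep _ fun v => by
      obtain ⟨x, rfl⟩ := toV_surjective θ v
      have hαx := hu (A.subtype α x)
      rw [Sharp.a_map_aut_of_map_inl_of_map_inr hσ₁ hg₁,
        Sharp.a_map_aut_of_map_inl_of_map_inr hσ₂ hg₂, hu x] at hαx
      rw [← hg₁V]
      exact (add_left_cancel hαx).symm
  obtain ⟨h, rfl⟩ := toV_surjective θ u
  refine ⟨h, SemidirectProduct.eq_conj_of_map_inl_of_map_inr h (fun x => ?_) (fun α => ?_)⟩
  · rw [← map_inv, ← map_mul, ← map_mul, hσ₁, hσ₂, map_mul σ₁, map_mul σ₁, map_inv σ₁,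
      Sharp.mul_mul_inv_eq hωalt h2, hσ₁v, hσ₁v, ← hu, ← hσ₂v]
  · rw [map_mul, map_mul, map_inv, hσ₁, hg₁, hg₂, hg, (SemidirectProduct.commute_inl_inr
      (Sharp.spHom_apply_eq_self (by rw [hσ₁v, hfix]))).mul_inv_cancel]

/-- Uniqueness, up to conjugation by an element of `P`, of special
isomorphisms for an odd prime `p`: if `f₁, f₂ : A ⋉ P → Sp(V) ⋉ V♯` are
homomorphisms which on `A` are given by the natural projection `A → Sp(V)` and
whose restrictions to `P` are special isomorphisms onto `{1} ⋉ V♯`, then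
`f₂ = f₁ ∘ (conjugation by some `h ∈ P`)`.  Here `P` is a Heisenberg
`𝔽_p`-group with `|P| > p`, `Z(P)` is identified with `𝔽_p` via `ι`,
`V = P/Z(P)` (identified via `θ`), `ω` is the commutator form `ω_P`, and
`V♯ = V♯_{ω_P/2}`. -/
theorem stmt_16 (p : ℕ) [Fact p.Prime] (hp2 : p ≠ 2)
    (P : Type*) [Group P] [Finite P] (hP : IsHeisenberg p P)
    (hbig : p < Nat.card P)
    (V : Type*) [AddCommGroup V] [Module (ZMod p) V]
    (ι : ↥(Subgroup.center P) ≃* Multiplicative (ZMod p))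
    (θ : (P ⧸ Subgroup.center P) ≃* Multiplicative V)
    (ω : V →ₗ[ZMod p] V →ₗ[ZMod p] ZMod p)
    (hω : ∀ x y : P, ι ⟨⁅x, y⁆, hP.commutator_mem x y⟩ =
      Multiplicative.ofAdd (ω (toV θ x) (toV θ y)))
    (A : Subgroup (MulAut P))
    (hA : ∀ α ∈ A, ∀ z ∈ Subgroup.center P, α z = z)
    (f₁ f₂ : (P ⋊[A.subtype] ↥A) →*
      (Sharp ((2 : ZMod p)⁻¹ • ω) ⋊[spHom ((2 : ZMod p)⁻¹) ω] ↥(SpGrp ω)))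
    -- each `f i` restricted to `A` is the natural projection `A → Sp(V)`
    (hf₁A : ∀ α : ↥A, ∃ g : ↥(SpGrp ω),
      f₁ (SemidirectProduct.inr α) = SemidirectProduct.inr g ∧
      ∀ x : P, toV θ ((α : MulAut P) x) = (g : V ≃ₗ[ZMod p] V) (toV θ x))
    (hf₂A : ∀ α : ↥A, ∃ g : ↥(SpGrp ω),
      f₂ (SemidirectProduct.inr α) = SemidirectProduct.inr g ∧
      ∀ x : P, toV θ ((α : MulAut P) x) = (g : V ≃ₗ[ZMod p] V) (toV θ x))
    -- each `f i` restricted to `{1} ⋉ P` is a special isomorphism onto `{1} ⋉ V♯`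
    (hf₁P : (∀ x : P, ∃ a : ZMod p,
        f₁ (SemidirectProduct.inl x) = SemidirectProduct.inl ⟨a, toV θ x⟩) ∧
      Function.Injective (fun x : P => f₁ (SemidirectProduct.inl x)) ∧
      ∀ y : Sharp ((2 : ZMod p)⁻¹ • ω), ∃ x : P,
        f₁ (SemidirectProduct.inl x) = SemidirectProduct.inl y)
    (hf₂P : (∀ x : P, ∃ a : ZMod p,
        f₂ (SemidirectProduct.inl x) = SemidirectProduct.inl ⟨a, toV θ x⟩) ∧
      Function.Injective (fun x : P => f₂ (SemidirectProduct.inl x)) ∧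
      ∀ y : Sharp ((2 : ZMod p)⁻¹ • ω), ∃ x : P,
        f₂ (SemidirectProduct.inl x) = SemidirectProduct.inl y) :
    ∃ h : P, ∀ g : P ⋊[A.subtype] ↥A,
      f₂ g = f₁ (SemidirectProduct.inl h * g * (SemidirectProduct.inl h)⁻¹) :=
  stmt_16_general p hp2 P hP hbig V ι θ ω hω A f₁ f₂ hf₁A hf₂A hf₁P hf₂P
end
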